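/- arXiv:2309.11885 — 4 statements merged into one kernel-verified Lean document; each statement's English description precedes it below -/
import Mathlib

section
/- For any finite tree T and any vertex u of T, φ'_{T,u}(1) / (1 + φ_{T,u}(1)) ≤ φ_{T,u}(1) / 2, with equality if and only if T is a path and u is a leaf of T (including the case where T is the single vertex u). -/
open Finset Polynomial

variable {V : Type*}

/-- The vertex sets of the subtrees of `G` that lie inside the set `S` and contain
the vertex `w` : nonempty connected induced subgraphs. -/
noncomputable def subtreesIn [Fintype V] [DecidableEq V] (G : SimpleGraph V) (S : Set V)
    (w : V) : Finset (Finset V) := by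
  classical
  exact Finset.univ.filter fun A => w ∈ A ∧ (A : Set V) ⊆ S ∧ (G.induce (A : Set V)).Connected

/-- The vertex sets of the subtrees of `G` containing `w`. -/
noncomputable def subtrees [Fintype V] [DecidableEq V] (G : SimpleGraph V) (w : V) :
    Finset (Finset V) := subtreesIn G Set.univ w

/-- The generating polynomial `φ_{T,w}` of subtrees of `G` inside `S` containing `w`,
counted by order. -/
noncomputable def subtreePolyIn [Fintype V] [DecidableEq V] (G : SimpleGraph V) (S : Set V)
    (w : V) : Polynomial ℝ := ∑ A ∈ subtreesIn G S w, X ^ A.card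

/-- The generating polynomial `φ_{T,w}` of subtrees of `G` containing `w`. -/
noncomputable def subtreePoly [Fintype V] [DecidableEq V] (G : SimpleGraph V) (w : V) :
    Polynomial ℝ := subtreePolyIn G Set.univ w

/-- The local mean subtree order `μ(G; w)`: the average order of subtrees of `G`
containing `w`. -/
noncomputable def meanOrder [Fintype V] [DecidableEq V] (G : SimpleGraph V) (w : V) : ℝ :=
  (∑ A ∈ subtrees G w, (A.card : ℝ)) / ((subtrees G w).card : ℝ)

/-- The vertex set of the connected component of `G - D` containing `w`. -/
def compDel (G : SimpleGraph V) (D : Set V) (w : V) : Set V :=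
  {x | ∃ p : G.Walk w x, ∀ y ∈ p.support, y ∉ D}

/-- The neighbours of `u` as a `Finset`. -/
noncomputable def nbrFinset [Fintype V] (G : SimpleGraph V) (u : V) : Finset V := by
  classical
  exact Finset.univ.filter fun w => G.Adj u w

/-- `G` is a path: a tree all of whose vertices have degree at most `2`. -/
def IsPathGraph [Fintype V] (G : SimpleGraph V) : Prop :=
  G.IsTree ∧ ∀ v : V, (G.neighborSet v).ncard ≤ 2

/-- The induced subgraph of `G` on `S` is a path (as a subgraph of a tree:
connected with all degrees within `S` at most `2`). -/
def IsPathOn (G : SimpleGraph V) (S : Set V) : Prop :=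
  (G.induce S).Connected ∧ ∀ x ∈ S, (G.neighborSet x ∩ S).ncard ≤ 2

/-- The partial Kelmans operation on `G` from `v` to `u`, moving the edges between
`v` and the set `W`: each edge `v w`, `w ∈ W`, is replaced by the edge `u w`. -/
def pkelmans (G : SimpleGraph V) (v u : V) (W : Set V) : SimpleGraph V :=
  SimpleGraph.fromRel fun a b =>
    (G.Adj a b ∧ ¬(a = v ∧ b ∈ W) ∧ ¬(b = v ∧ a ∈ W)) ∨
    (a = u ∧ b ∈ W ∧ G.Adj v b)

/-- The Kelmans operation on `G` from `v` to `u`: every edge `v w` with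
`w ∈ N(v) \ {u}` is replaced by the edge `u w`. -/
def kelmans (G : SimpleGraph V) (v u : V) : SimpleGraph V :=
  pkelmans G v u (G.neighborSet v \ {u})

/-!
Let `S` be the family of subtrees of `T` containing `u`, `N = #S`, and for a vertex `v` let
`P v ∈ S` be the vertex set of the `u`–`v` path. A subtree `A ∈ S` contains `P v` iff `v ∈ A`,
so `φ'(1) = ∑_{A ∈ S} #A` counts the pairs `P v ⊆ A` of members of `S`. In a poset with `N`
elements at most `N (N + 1) / 2` ordered pairs satisfy `b ≤ a`, with equality iff it is a chain;
hence `2 φ'(1) ≤ N (N + 1)`, which is the inequality. Equality forces every member of `S`, in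
particular the whole vertex set, to be some `P v`: `T` has a Hamiltonian path starting at `u`,
i.e. `T` is a path with end `u`. Conversely, the subtrees of such a path containing `u` are its
initial segments, a chain of sets `P v`.
-/

namespace Finset

variable {α : Type*} [PartialOrder α] [DecidableLE α]

theorem two_mul_card_filter_le_eq [DecidableEq α] (s : Finset α) :
    2 * #{p ∈ s ×ˢ s | p.1 ≤ p.2} = #{p ∈ s ×ˢ s | p.1 ≤ p.2 ∨ p.2 ≤ p.1} + #s := by
  have hswap : #{p ∈ s ×ˢ s | p.2 ≤ p.1} = #{p ∈ s ×ˢ s | p.1 ≤ p.2} :=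
    card_nbij' Prod.swap Prod.swap (fun _ _ => by simp_all) (fun _ _ => by simp_all)
      (fun _ _ => rfl) (fun _ _ => rfl)
  have hdiag : {p ∈ s ×ˢ s | p.1 ≤ p.2 ∧ p.2 ≤ p.1} = s.diag := by
    ext ⟨a, b⟩
    simp only [mem_filter, mem_product, mem_diag, ← le_antisymm_iff]
    constructor
    · rintro ⟨⟨ha, -⟩, rfl⟩; exact ⟨ha, rfl⟩
    · rintro ⟨ha, rfl⟩; exact ⟨⟨ha, ha⟩, rfl⟩
  rw [two_mul]
  nth_rewrite 2 [← hswap]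
  rw [← card_union_add_card_inter, ← filter_or, ← filter_and, hdiag, diag_card]

theorem card_filter_comparable_eq_iff (s : Finset α) :
    #{p ∈ s ×ˢ s | p.1 ≤ p.2 ∨ p.2 ≤ p.1} = #s * #s ↔
      IsChain (· ≤ ·) (s : Set α) := by
  rw [← card_product, card_filter_eq_iff]
  constructor
  · intro h a ha b hb _
    exact h (a, b) (mem_product.2 ⟨ha, hb⟩)
  · rintro h ⟨a, b⟩ hab
    rw [mem_product] at hab
    exact h.total hab.1 hab.2

theorem sum_card_filter_le_eq (s : Finset α) :
    ∑ a ∈ s, #{b ∈ s | b ≤ a} = #{p ∈ s ×ˢ s | p.1 ≤ p.2} := by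
  rw [card_filter, sum_product_right]
  simp only [card_filter]

theorem sum_card_filter_le_eq_iff {s t : Finset α} (hts : t ⊆ s) :
    ∑ a ∈ s, #{b ∈ t | b ≤ a} = ∑ a ∈ s, #{b ∈ s | b ≤ a} ↔ s ⊆ t := by
  rw [sum_eq_sum_iff_of_le fun a _ => card_le_card (filter_subset_filter _ hts)]
  constructor
  · intro h a ha
    have heq := eq_of_subset_of_card_le (filter_subset_filter _ hts) (h a ha).ge
    have ha' : a ∈ ({b ∈ s | b ≤ a} : Finset α) := mem_filter.2 ⟨ha, le_rfl⟩
    exact (mem_filter.1 (heq ▸ ha')).1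
  · intro h a _
    rw [subset_antisymm hts h]

theorem two_mul_sum_card_filter_le [DecidableEq α] {s t : Finset α} (hts : t ⊆ s) :
    2 * ∑ a ∈ s, #{b ∈ t | b ≤ a} ≤ #s * #s + #s ∧
      (2 * ∑ a ∈ s, #{b ∈ t | b ≤ a} = #s * #s + #s ↔
        s ⊆ t ∧ IsChain (· ≤ ·) (s : Set α)) := by
  have hmono : ∑ a ∈ s, #{b ∈ t | b ≤ a} ≤ ∑ a ∈ s, #{b ∈ s | b ≤ a} :=
    sum_le_sum fun a _ => card_le_card (filter_subset_filter _ hts)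
  have hcomp : #{p ∈ s ×ˢ s | p.1 ≤ p.2 ∨ p.2 ≤ p.1} ≤ #s * #s :=
    (card_filter_le _ _).trans_eq (card_product s s)
  have hpairs := two_mul_card_filter_le_eq s
  rw [← sum_card_filter_le_eq] at hpairs
  rw [← sum_card_filter_le_eq_iff hts, ← card_filter_comparable_eq_iff]
  omega

end Finset

namespace SimpleGraph

variable {G : SimpleGraph V} {u v x : V}

namespace Walk

variable {p : G.Walk u v}

lemma neighborSet_toSubgraph_eq_empty_of_notMem (hx : x ∉ p.support) :
    p.toSubgraph.neighborSet x = ∅ :=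
  Set.eq_empty_of_forall_notMem fun _ hy =>
    hx (p.fst_mem_support_of_mem_edges (adj_toSubgraph_iff_mem_edges.1 hy))

variable [DecidableEq V]

lemma IsPath.ncard_neighborSet_toSubgraph_of_ne_end (hp : p.IsPath) (hx : x ∈ p.support)
    (hxv : x ≠ v) : (p.toSubgraph.neighborSet x).ncard = if x = u then 1 else 2 := by
  obtain ⟨i, rfl, hi⟩ := mem_support_iff_exists_getVert.1 hx
  have hil : i < p.length := lt_of_le_of_ne hi fun h => hxv (h ▸ p.getVert_length)
  rcases Nat.eq_zero_or_pos i with rfl | hi0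
  · rw [getVert_zero] at hxv ⊢
    rw [hp.neighborSet_toSubgraph_startpoint (not_nil_of_ne hxv), Set.ncard_singleton, if_pos rfl]
  · rw [hp.ncard_neighborSet_toSubgraph_internal_eq_two hi0.ne' hil,
      if_neg fun h => hi0.ne' ((hp.getVert_eq_start_iff hi).1 h)]

lemma IsPath.ncard_neighborSet_toSubgraph_le (hp : p.IsPath) (x : V) :
    (p.toSubgraph.neighborSet x).ncard ≤ if x = u then 1 else 2 := by
  by_cases hnil : p.Nil
  · have hempty : p.toSubgraph.neighborSet x = ∅ := Set.eq_empty_of_forall_notMem fun _ hy => by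
      simpa [edges_eq_nil.2 hnil] using adj_toSubgraph_iff_mem_edges.1 hy
    rw [hempty, Set.ncard_empty]
    exact Nat.zero_le _
  by_cases hx : x ∈ p.support
  · by_cases hxv : x = v
    · subst hxv
      rw [hp.neighborSet_toSubgraph_endpoint hnil, Set.ncard_singleton]
      split_ifs <;> omega
    · exact (hp.ncard_neighborSet_toSubgraph_of_ne_end hx hxv).le
  · rw [neighborSet_toSubgraph_eq_empty_of_notMem hx, Set.ncard_empty]
    exact Nat.zero_le _

end Walk

open Walk

namespace IsTree

noncomputable def path (hG : G.IsTree) (u v : V) : G.Walk u v :=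
  (hG.existsUnique_path u v).exists.choose

lemma isPath_path (hG : G.IsTree) (u v : V) : (hG.path u v).IsPath :=
  (hG.existsUnique_path u v).exists.choose_spec

lemma eq_path (hG : G.IsTree) {p : G.Walk u v} (hp : p.IsPath) : p = hG.path u v :=
  (hG.existsUnique_path u v).unique hp (hG.isPath_path u v)

end IsTree

variable [DecidableEq V]

lemma IsAcyclic.mem_edges_of_adj (hG : G.IsAcyclic) (p : G.Walk u v) {x y : V}
    (hx : x ∈ p.support) (hy : y ∈ p.support) (hxy : G.Adj x y) : s(x, y) ∈ p.edges := by
  have h := isBridge_iff_forall_walk_mem_edges.1 (isAcyclic_iff_forall_adj_isBridge.1 hG hxy)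
    ((p.takeUntil x hx).reverse.append (p.takeUntil y hy))
  rw [edges_append, edges_reverse, List.mem_append, List.mem_reverse] at h
  exact h.elim (p.edges_takeUntil_subset_edges hx ·) (p.edges_takeUntil_subset_edges hy ·)

lemma IsAcyclic.neighborSet_eq_of_isHamiltonian (hG : G.IsAcyclic) {p : G.Walk u v}
    (hp : p.IsHamiltonian) (x : V) : G.neighborSet x = p.toSubgraph.neighborSet x :=
  Set.ext fun y =>
    ⟨fun h => adj_toSubgraph_iff_mem_edges.2
      (hG.mem_edges_of_adj p (hp.mem_support x) (hp.mem_support y) h),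
    fun h => p.toSubgraph.adj_sub h⟩

namespace IsTree

noncomputable def pathFinset (hG : G.IsTree) (u v : V) : Finset V :=
  (hG.path u v).support.toFinset

lemma mem_pathFinset (hG : G.IsTree) : x ∈ hG.pathFinset u v ↔ x ∈ (hG.path u v).support :=
  List.mem_toFinset

lemma start_mem_pathFinset (hG : G.IsTree) (u v : V) : u ∈ hG.pathFinset u v :=
  hG.mem_pathFinset.2 (hG.path u v).start_mem_support

lemma end_mem_pathFinset (hG : G.IsTree) (u v : V) : v ∈ hG.pathFinset u v :=
  hG.mem_pathFinset.2 (hG.path u v).end_mem_support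

lemma pathFinset_eq_takeUntil (hG : G.IsTree) (hx : x ∈ (hG.path u v).support) :
    hG.pathFinset u x = ((hG.path u v).takeUntil x hx).support.toFinset := by
  rw [pathFinset, ← hG.eq_path ((hG.isPath_path u v).takeUntil hx)]

lemma pathFinset_injective (hG : G.IsTree) (u : V) : Function.Injective (hG.pathFinset u) := by
  intro v w h
  have hw : w ∈ (hG.path u v).support := hG.mem_pathFinset.1 (h ▸ hG.end_mem_pathFinset u w)
  -- The path to `w` is the prefix of the path to `v` ending at `w`; having the same vertex set,
  -- it is the whole path.
  have hlen : ((hG.path u v).takeUntil w hw).support.length = (hG.path u v).support.length := by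
    rw [← List.toFinset_card_of_nodup ((hG.isPath_path u v).takeUntil hw).support_nodup,
      ← List.toFinset_card_of_nodup (hG.isPath_path u v).support_nodup,
      ← pathFinset_eq_takeUntil, ← pathFinset, h]
  have hsupp := ((hG.path u v).support_takeUntil_prefix_support hw).eq_of_length hlen
  rw [← (hG.path u v).getLast_support, ← ((hG.path u v).takeUntil w hw).getLast_support]
  simp only [hsupp]

lemma pathFinset_subset_or_subset (hG : G.IsTree) {y : V} (hx : x ∈ (hG.path u v).support)
    (hy : y ∈ (hG.path u v).support) :
    hG.pathFinset u x ⊆ hG.pathFinset u y ∨ hG.pathFinset u y ⊆ hG.pathFinset u x := by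
  rw [hG.pathFinset_eq_takeUntil hx, hG.pathFinset_eq_takeUntil hy]
  exact (List.prefix_or_prefix_of_prefix ((hG.path u v).support_takeUntil_prefix_support hx)
    ((hG.path u v).support_takeUntil_prefix_support hy)).imp
    (Multiset.toFinset_subset.2 <| Multiset.coe_subset.2 ·.subset)
    (Multiset.toFinset_subset.2 <| Multiset.coe_subset.2 ·.subset)

lemma ncard_neighborSet_le_of_isHamiltonian (hG : G.IsTree) (hp : (hG.path u v).IsHamiltonian)
    (x : V) : (G.neighborSet x).ncard ≤ if x = u then 1 else 2 := by
  rw [hG.isAcyclic.neighborSet_eq_of_isHamiltonian hp]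
  exact (hG.isPath_path u v).ncard_neighborSet_toSubgraph_le x

variable [Fintype V]

lemma exists_isHamiltonian_path (hG : G.IsTree) (u : V)
    (hdeg : ∀ x, (G.neighborSet x).ncard ≤ if x = u then 1 else 2) :
    ∃ v, (hG.path u v).IsHamiltonian := by
  obtain ⟨v, -, hmax⟩ :=
    univ.exists_max_image (fun v => (hG.path u v).length) ⟨u, mem_univ u⟩
  refine ⟨v, ?_⟩
  have hp := hG.isPath_path u v
  generalize hG.path u v = p at hmax hp ⊢
  refine hp.isHamiltonian_of_mem fun x => ?_
  by_contra hx
  obtain ⟨d, -, ha, hb⟩ :=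
    (hG.path u x).exists_boundary_dart {y | y ∈ p.support} p.start_mem_support hx
  replace ha : d.fst ∈ p.support := ha
  replace hb : d.snd ∉ p.support := hb
  -- The edge `d` leaves the longest path `p`: at the end of `p` it would extend `p`, elsewhere
  -- its foot would have one neighbour more than the degree bound allows.
  by_cases hav : d.fst = v
  · have hlonger := hmax d.snd (mem_univ _)
    rw [← hG.eq_path (hp.concat hb (hav ▸ d.adj)), length_concat] at hlonger
    omega
  · have hins : insert d.snd (p.toSubgraph.neighborSet d.fst) ⊆ G.neighborSet d.fst :=
      Set.insert_subset d.adj fun _ h => p.toSubgraph.adj_sub h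
    have hnotMem : d.snd ∉ p.toSubgraph.neighborSet d.fst := fun h =>
      hb (p.snd_mem_support_of_mem_edges (adj_toSubgraph_iff_mem_edges.1 h))
    have hle := Set.ncard_le_ncard hins (Set.toFinite _)
    rw [Set.ncard_insert_of_notMem hnotMem (Set.toFinite _),
      hp.ncard_neighborSet_toSubgraph_of_ne_end ha hav] at hle
    have := hdeg d.fst
    split_ifs at * <;> omega

lemma exists_isHamiltonian_path_iff (hG : G.IsTree) (u : V) :
    (∃ v, (hG.path u v).IsHamiltonian) ↔
      ∀ x, (G.neighborSet x).ncard ≤ if x = u then 1 else 2 :=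
  ⟨fun ⟨_, hp⟩ => hG.ncard_neighborSet_le_of_isHamiltonian hp,
    hG.exists_isHamiltonian_path u⟩

lemma isPathGraph_and_ncard_neighborSet_le_one_iff (hG : G.IsTree) :
    IsPathGraph G ∧ (G.neighborSet u).ncard ≤ 1 ↔
      ∀ x, (G.neighborSet x).ncard ≤ if x = u then 1 else 2 := by
  refine ⟨fun ⟨⟨_, h2⟩, h1⟩ x => ?_,
    fun h => ⟨⟨hG, fun x => ?_⟩, by simpa using h u⟩⟩
  · split_ifs with hx
    exacts [hx ▸ h1, h2 x]
  · have := h x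
    split_ifs at this <;> omega

end IsTree

end SimpleGraph

section Subtrees

variable [Fintype V] [DecidableEq V] {G : SimpleGraph V} {u : V}

lemma mem_subtrees_iff {A : Finset V} :
    A ∈ subtrees G u ↔ u ∈ A ∧ (G.induce (A : Set V)).Connected := by
  simp [subtrees, subtreesIn]

lemma eval_one_subtreePoly (G : SimpleGraph V) (u : V) :
    (subtreePoly G u).eval 1 = #(subtrees G u) := by
  simp [subtreePoly, subtreePolyIn, subtrees, eval_finsetSum]

lemma eval_one_derivative_subtreePoly (G : SimpleGraph V) (u : V) :
    (derivative (subtreePoly G u)).eval 1 = ∑ A ∈ subtrees G u, (#A : ℝ) := by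
  simp [subtreePoly, subtreePolyIn, subtrees, eval_finsetSum, derivative_X_pow]

namespace SimpleGraph.IsTree

lemma univ_mem_subtrees (hG : G.IsTree) (u : V) : univ ∈ subtrees G u := by
  rw [mem_subtrees_iff, coe_univ]
  exact ⟨mem_univ u, G.induceUnivIso.connected_iff.2 hG.connected⟩

lemma pathFinset_mem_subtrees (hG : G.IsTree) (u v : V) : hG.pathFinset u v ∈ subtrees G u := by
  rw [mem_subtrees_iff, pathFinset, List.coe_toFinset]
  exact ⟨hG.start_mem_pathFinset u v, (hG.path u v).connected_induce_support⟩

lemma pathFinset_subset_of_mem_subtrees (hG : G.IsTree) {A : Finset V} {v : V}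
    (hA : A ∈ subtrees G u) (hv : v ∈ A) : hG.pathFinset u v ⊆ A := by
  obtain ⟨hu, hconn⟩ := mem_subtrees_iff.1 hA
  obtain ⟨q, hq⟩ := hconn.exists_isPath ⟨u, hu⟩ ⟨v, hv⟩
  let f := (Embedding.induce (G := G) (A : Set V)).toHom
  have hmap : q.map f = hG.path u v := hG.eq_path (hq.map (Embedding.induce (G := G) _).injective)
  intro x hx
  rw [mem_pathFinset, ← hmap] at hx
  obtain ⟨y, -, rfl⟩ := List.mem_map.1 (Walk.support_map f q ▸ hx)
  exact y.2

lemma image_pathFinset_subset_subtrees (hG : G.IsTree) (u : V) :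
    univ.image (hG.pathFinset u) ⊆ subtrees G u := by
  intro B hB
  obtain ⟨v, -, rfl⟩ := mem_image.1 hB
  exact hG.pathFinset_mem_subtrees u v

lemma card_filter_image_pathFinset (hG : G.IsTree) {A : Finset V} (hA : A ∈ subtrees G u) :
    #{B ∈ univ.image (hG.pathFinset u) | B ≤ A} = #A := by
  rw [filter_image, card_image_of_injective _ (hG.pathFinset_injective u)]
  congr 1
  ext v
  simp only [mem_filter, mem_univ, true_and]
  exact ⟨fun h => h (hG.end_mem_pathFinset u v), hG.pathFinset_subset_of_mem_subtrees hA⟩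

lemma mem_image_pathFinset_of_isHamiltonian (hG : G.IsTree) {v : V}
    (hp : (hG.path u v).IsHamiltonian) {A : Finset V} (hA : A ∈ subtrees G u) :
    A ∈ univ.image (hG.pathFinset u) := by
  obtain ⟨w, hwA, hmax⟩ :=
    A.exists_max_image (fun w => #(hG.pathFinset u w)) ⟨u, (mem_subtrees_iff.1 hA).1⟩
  refine mem_image.2 ⟨w, mem_univ w,
    subset_antisymm (hG.pathFinset_subset_of_mem_subtrees hA hwA) fun x hx => ?_⟩
  rcases hG.pathFinset_subset_or_subset (hp.mem_support x) (hp.mem_support w) with h | h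
  · exact h (hG.end_mem_pathFinset u x)
  · rw [eq_of_subset_of_card_le h (hmax x hx)]
    exact hG.end_mem_pathFinset u x

lemma isChain_image_pathFinset (hG : G.IsTree) {v : V} (hp : (hG.path u v).IsHamiltonian) :
    IsChain (· ≤ ·) (univ.image (hG.pathFinset u) : Set (Finset V)) := by
  rintro _ hB _ hC -
  simp only [coe_image, coe_univ, Set.image_univ, Set.mem_range] at hB hC
  obtain ⟨x, rfl⟩ := hB
  obtain ⟨y, rfl⟩ := hC
  exact hG.pathFinset_subset_or_subset (hp.mem_support x) (hp.mem_support y)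

lemma subtrees_subset_image_pathFinset_and_isChain_iff (hG : G.IsTree) (u : V) :
    (subtrees G u ⊆ univ.image (hG.pathFinset u) ∧
        IsChain (· ≤ ·) (subtrees G u : Set (Finset V))) ↔
      ∃ v, (hG.path u v).IsHamiltonian := by
  constructor
  · rintro ⟨hsub, -⟩
    obtain ⟨v, -, hv⟩ := mem_image.1 (hsub (hG.univ_mem_subtrees u))
    exact ⟨v, (hG.isPath_path u v).isHamiltonian_of_mem fun x =>
      hG.mem_pathFinset.1 (hv ▸ mem_univ x)⟩
  · rintro ⟨v, hp⟩
    have hsub : subtrees G u ⊆ univ.image (hG.pathFinset u) := fun A hA =>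
      hG.mem_image_pathFinset_of_isHamiltonian hp hA
    exact ⟨hsub, (hG.isChain_image_pathFinset hp).mono (coe_subset.2 hsub)⟩

theorem two_mul_sum_card_subtrees (hG : G.IsTree) (u : V) :
    2 * ∑ A ∈ subtrees G u, #A ≤ #(subtrees G u) * #(subtrees G u) + #(subtrees G u) ∧
      (2 * ∑ A ∈ subtrees G u, #A = #(subtrees G u) * #(subtrees G u) + #(subtrees G u) ↔
        ∃ v, (hG.path u v).IsHamiltonian) := by
  have h := two_mul_sum_card_filter_le (hG.image_pathFinset_subset_subtrees u)
  rwa [sum_congr rfl fun A hA => hG.card_filter_image_pathFinset hA,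
    subtrees_subset_image_pathFinset_and_isChain_iff] at h

end SimpleGraph.IsTree

end Subtrees

lemma div_one_add_le_div_two_iff {a n : ℕ} :
    (a : ℝ) / (1 + n) ≤ n / 2 ↔ 2 * a ≤ n * n + n := by
  rw [div_le_div_iff₀ (by positivity) two_pos, ← Nat.cast_le (α := ℝ)]
  push_cast
  constructor <;> intro h <;> linarith

lemma div_one_add_eq_div_two_iff {a n : ℕ} :
    (a : ℝ) / (1 + n) = n / 2 ↔ 2 * a = n * n + n := by
  rw [div_eq_div_iff (by positivity) two_ne_zero, ← Nat.cast_inj (R := ℝ)]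
  push_cast
  constructor <;> intro h <;> linarith

/-- For any finite tree `T` and vertex `u`,
`φ'_{T,u}(1) / (1 + φ_{T,u}(1)) ≤ φ_{T,u}(1) / 2`, with equality iff `T` is a path and
`u` is a leaf of `T` (including the one-vertex case). -/
theorem subtreePoly_deriv_ineq {V : Type*} [Fintype V] [DecidableEq V]
    (G : SimpleGraph V) (hG : G.IsTree) (u : V) :
    (Polynomial.derivative (subtreePoly G u)).eval 1 / (1 + (subtreePoly G u).eval 1)
        ≤ (subtreePoly G u).eval 1 / 2 ∧
      ((Polynomial.derivative (subtreePoly G u)).eval 1 / (1 + (subtreePoly G u).eval 1)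
          = (subtreePoly G u).eval 1 / 2 ↔
        IsPathGraph G ∧ (G.neighborSet u).ncard ≤ 1) := by
  obtain ⟨hle, heq⟩ := hG.two_mul_sum_card_subtrees u
  rw [eval_one_derivative_subtreePoly, eval_one_subtreePoly, ← Nat.cast_sum,
    div_one_add_le_div_two_iff, div_one_add_eq_div_two_iff, heq, hG.exists_isHamiltonian_path_iff,
    hG.isPathGraph_and_ncard_neighborSet_le_one_iff]
  exact ⟨hle, Iff.rfl⟩
end

section
/- Let v be a leaf of a finite tree T with at least 2 vertices, and let u be the neighbor of v. Then μ(T; v) ≥ μ(T; u), with equality if and only if T is a path. -/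
/-!
Let `𝒜` be the family of subtrees containing `u` but not the leaf `v`, with `M` members of total
order `S`. The subtrees containing `u` are the members of `𝒜` and their extensions by `v`; those
containing `v` are `{v}` and the same extensions. Hence
`μ(T; v) - μ(T; u) = (M(M+1) - 2S) / (2M(M+1))`.

Since `T - v` is connected, `𝒜` has members of every order `1, …, n - 1`, and counting the fibres
of the order map gives `2S ≤ M(M+1)`, with equality iff distinct members of `𝒜` have distinct
orders. When all degrees are at most `2` the members of `𝒜` are nested, so this holds. A vertex `w`
of degree at least `3` has two neighbours off the `v`–`w` path, and adding either of them to the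
`u`–`w` path gives two members of `𝒜` of the same order.
-/

open Finset Polynomial

variable {V : Type*}

namespace Finset

section ImageIcc

variable {ι : Type*} {s : Finset ι} {f : ι → ℕ} {n : ℕ}

theorem two_mul_sum_Icc_id (n : ℕ) : 2 * ∑ k ∈ Icc 1 n, k = n * (n + 1) := by
  induction n with
  | zero => simp
  | succ n ih => rw [sum_Icc_succ_top (by omega), mul_add, ih]; ring

theorem sum_add_mul_le_of_image_eq_Icc (hf : s.image f = Icc 1 n) :
    ∑ i ∈ s, f i + n * n ≤ ∑ k ∈ Icc 1 n, k + n * #s := by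
  have hsum : ∑ i ∈ s, f i = ∑ k ∈ Icc 1 n, #{i ∈ s | f i = k} * k := by
    simpa [hf] using sum_comp id f (s := s)
  have hcard : #s = ∑ k ∈ Icc 1 n, #{i ∈ s | f i = k} := hf ▸ card_eq_sum_card_image f s
  have hfiber : ∀ k ∈ Icc 1 n, 1 ≤ #{i ∈ s | f i = k} := by
    intro k hk
    obtain ⟨i, hi, rfl⟩ := mem_image.mp (hf ▸ hk)
    exact card_pos.mpr ⟨i, mem_filter.mpr ⟨hi, rfl⟩⟩
  have hnn : n * n = ∑ _k ∈ Icc 1 n, n := by simp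
  rw [hsum, hcard, hnn, mul_sum, ← sum_add_distrib, ← sum_add_distrib]
  refine sum_le_sum fun k hk => ?_
  obtain ⟨m, hm⟩ := Nat.exists_eq_add_of_le (hfiber k hk)
  rw [hm]
  nlinarith [Nat.mul_le_mul_left m (mem_Icc.mp hk).2]

theorem two_mul_sum_add_le_of_image_eq_Icc (hf : s.image f = Icc 1 n) :
    2 * ∑ i ∈ s, f i + (#s - n) * (#s - n + 1) ≤ #s * (#s + 1) := by
  have hn : n ≤ #s := by simpa [hf] using card_image_le (s := s) (f := f)
  obtain ⟨e, he⟩ := Nat.exists_eq_add_of_le hn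
  have hle := sum_add_mul_le_of_image_eq_Icc hf
  have hgauss := two_mul_sum_Icc_id n
  rw [he] at hle ⊢
  rw [Nat.add_sub_cancel_left]
  nlinarith

theorem two_mul_sum_le_of_image_eq_Icc (hf : s.image f = Icc 1 n) :
    2 * ∑ i ∈ s, f i ≤ #s * (#s + 1) :=
  le_self_add.trans (two_mul_sum_add_le_of_image_eq_Icc hf)

theorem two_mul_sum_eq_iff_injOn_of_image_eq_Icc (hf : s.image f = Icc 1 n) :
    2 * ∑ i ∈ s, f i = #s * (#s + 1) ↔ Set.InjOn f s := by
  constructor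
  · intro heq
    have hdeficit := two_mul_sum_add_le_of_image_eq_Icc hf
    have hsn : #s - n = 0 := by nlinarith
    rw [← card_image_iff]
    exact le_antisymm card_image_le (by rw [hf, Nat.card_Icc]; omega)
  · intro hinj
    rw [← sum_image (f := fun k => k) hinj, ← card_image_of_injOn hinj, hf, two_mul_sum_Icc_id,
      Nat.card_Icc, Nat.add_sub_cancel]

end ImageIcc

section InsertFamily

variable {α : Type*} [DecidableEq α] {𝒜 : Finset (Finset α)} {a : α}

theorem injOn_insert_of_forall_notMem (h : ∀ A ∈ 𝒜, a ∉ A) :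
    Set.InjOn (insert a) (𝒜 : Set (Finset α)) :=
  fun A hA B hB hAB => by rw [← erase_insert (h A hA), hAB, erase_insert (h B hB)]

theorem sum_card_image_insert_of_forall_notMem (h : ∀ A ∈ 𝒜, a ∉ A) :
    ∑ B ∈ 𝒜.image (insert a), #B = ∑ A ∈ 𝒜, #A + #𝒜 := by
  rw [sum_image (injOn_insert_of_forall_notMem h), card_eq_sum_ones, ← sum_add_distrib]
  exact sum_congr rfl fun A hA => card_insert_of_notMem (h A hA)

end InsertFamily

end Finset

namespace SimpleGraph

variable {G : SimpleGraph V}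

theorem induce_connected_of_forall_exists_walk {s : Set V} {u : V} (hu : u ∈ s)
    (h : ∀ b ∈ s, ∃ p : G.Walk u b, ∀ x ∈ p.support, x ∈ s) : (G.induce s).Connected :=
  G.induce_connected_of_patches u hu fun {b} hb =>
    let ⟨p, hp⟩ := h b hb
    ⟨{x | x ∈ p.support}, hp, p.start_mem_support, p.end_mem_support,
      p.connected_induce_support.preconnected _ _⟩

theorem exists_isPath_of_induce_connected {s : Set V} (hs : (G.induce s).Connected) {a b : V}
    (ha : a ∈ s) (hb : b ∈ s) : ∃ p : G.Walk a b, p.IsPath ∧ ∀ x ∈ p.support, x ∈ s := by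
  classical
  obtain ⟨q⟩ := hs.preconnected ⟨a, ha⟩ ⟨b, hb⟩
  let ι : G.induce s →g G := (Embedding.induce s).toHom
  have hsupp : ∀ x ∈ (q.bypass.map ι).support, x ∈ s := by
    simp only [Walk.support_map, List.mem_map]
    rintro _ ⟨⟨y, hy⟩, -, rfl⟩
    exact hy
  exact ⟨_, q.bypass_isPath.map Subtype.val_injective, hsupp⟩

theorem induce_connected_insert {s : Set V} (hs : (G.induce s).Connected) {x y : V} (hy : y ∈ s)
    (hxy : G.Adj y x) : (G.induce (insert x s)).Connected := by
  have hunion : insert x s = s ∪ {y, x} := by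
    ext z; simp only [Set.mem_insert_iff, Set.mem_union, Set.mem_singleton_iff]
    constructor
    · rintro (rfl | hz) <;> simp [*]
    · rintro (hz | rfl | rfl) <;> simp [*]
  rw [hunion]
  exact induce_union_connected hs.preconnected (induce_pair_connected_of_adj hxy).preconnected
    ⟨y, hy, Set.mem_insert y _⟩

section Leaf

variable {u v : V}

theorem adj_iff_of_neighborSet_eq_singleton (hN : G.neighborSet v = {u}) {z : V} :
    G.Adj v z ↔ z = u := by
  rw [← mem_neighborSet, hN, Set.mem_singleton_iff]

theorem Walk.IsPath.notMem_support_of_neighborSet_eq_singleton (hN : G.neighborSet v = {u})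
    {x y : V} {p : G.Walk x y} (hp : p.IsPath) (hx : x ≠ v) (hy : y ≠ v) : v ∉ p.support := by
  intro hv
  obtain ⟨n, hn, hnl⟩ := Walk.mem_support_iff_exists_getVert.mp hv
  have hn0 : n ≠ 0 := by rintro rfl; exact hx (p.getVert_zero ▸ hn)
  have hnl' : n ≠ p.length := by rintro rfl; exact hy (p.getVert_length ▸ hn)
  have hprev : p.getVert (n - 1) = u := by
    have h := p.adj_getVert_succ (i := n - 1) (by omega)
    rw [Nat.sub_add_cancel (by omega), hn] at h
    exact (adj_iff_of_neighborSet_eq_singleton hN).mp h.symm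
  have hnext : p.getVert (n + 1) = u :=
    (adj_iff_of_neighborSet_eq_singleton hN).mp (hn ▸ p.adj_getVert_succ (by omega))
  have := hp.getVert_injOn (by simp only [Set.mem_ofPred_eq]; omega)
    (by simp only [Set.mem_ofPred_eq]; omega) (hprev.trans hnext.symm)
  omega

theorem induce_connected_diff_singleton_of_neighborSet_eq_singleton
    (hN : G.neighborSet v = {u}) {s : Set V} (hs : (G.induce s).Connected) (hu : u ∈ s) :
    (G.induce (s \ {v})).Connected := by
  have huv : u ≠ v := ((adj_iff_of_neighborSet_eq_singleton hN).mpr rfl).ne'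
  refine induce_connected_of_forall_exists_walk ⟨hu, huv⟩ fun b hb => ?_
  obtain ⟨p, hp, hps⟩ := exists_isPath_of_induce_connected hs hu hb.1
  exact ⟨p, fun x hx => ⟨hps x hx, fun hxv =>
    hp.notMem_support_of_neighborSet_eq_singleton hN huv hb.2 (hxv ▸ hx)⟩⟩

theorem mem_of_induce_connected_of_neighborSet_eq_singleton (hN : G.neighborSet v = {u})
    {s : Set V} (hs : (G.induce s).Connected) (hv : v ∈ s) {b : V} (hb : b ∈ s) (hbv : b ≠ v) :
    u ∈ s := by
  obtain ⟨p, -, hps⟩ := exists_isPath_of_induce_connected hs hv hb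
  cases p with
  | nil => exact absurd rfl hbv
  | cons h q =>
    exact (adj_iff_of_neighborSet_eq_singleton hN).mp h ▸
      hps _ (List.mem_cons_of_mem _ q.start_mem_support)

end Leaf

section Subtrees

variable [Fintype V] [DecidableEq V]

@[simp]
theorem mem_subtreesIn {S : Set V} {w : V} {A : Finset V} :
    A ∈ subtreesIn G S w ↔ w ∈ A ∧ (A : Set V) ⊆ S ∧ (G.induce (A : Set V)).Connected := by
  simp [subtreesIn]

@[simp]
theorem mem_subtrees {w : V} {A : Finset V} :
    A ∈ subtrees G w ↔ w ∈ A ∧ (G.induce (A : Set V)).Connected := by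
  simp [subtrees]

theorem singleton_mem_subtreesIn {S : Set V} {u : V} (hu : u ∈ S) : {u} ∈ subtreesIn G S u :=
  mem_subtreesIn.mpr ⟨mem_singleton_self u, by simpa using hu, by rw [coe_singleton]; simp⟩

theorem exists_mem_subtreesIn_card_eq {S : Finset V} (hS : (G.induce (S : Set V)).Connected)
    {u : V} (hu : u ∈ S) {k : ℕ} (hk : 1 ≤ k) (hkS : k ≤ #S) :
    ∃ A ∈ subtreesIn G S u, #A = k := by
  induction k, hk using Nat.le_induction with
  | base =>
    exact ⟨{u}, singleton_mem_subtreesIn hu, card_singleton u⟩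
  | succ k hk ih =>
    obtain ⟨A, hA, rfl⟩ := ih (by omega)
    rw [mem_subtreesIn] at hA
    obtain ⟨s, hsS, hsA⟩ := exists_of_ssubset (ssubset_of_subset_of_ne (coe_subset.mp hA.2.1)
      (by rintro rfl; omega))
    obtain ⟨p, -, hpS⟩ := exists_isPath_of_induce_connected hS (mem_coe.mpr hu) hsS
    obtain ⟨d, hd, hdA, hdA'⟩ := p.exists_boundary_dart A hA.1 hsA
    refine ⟨insert d.snd A, ?_, card_insert_of_notMem hdA'⟩
    rw [mem_subtreesIn, coe_insert]
    exact ⟨mem_insert_of_mem hA.1,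
      Set.insert_subset (hpS _ (p.dart_snd_mem_support_of_mem_darts hd)) hA.2.1,
      induce_connected_insert hA.2.2 hdA d.adj⟩

theorem image_card_subtreesIn {S : Finset V} (hS : (G.induce (S : Set V)).Connected) {u : V}
    (hu : u ∈ S) : (subtreesIn G S u).image card = Icc 1 #S := by
  ext k
  simp only [mem_image, mem_Icc]
  constructor
  · rintro ⟨A, hA, rfl⟩
    rw [mem_subtreesIn] at hA
    exact ⟨card_pos.mpr ⟨u, hA.1⟩, card_le_card (coe_subset.mp hA.2.1)⟩
  · exact fun hk => exists_mem_subtreesIn_card_eq hS hu hk.1 hk.2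

end Subtrees

section MaxDegreeTwo

variable [Finite V]

theorem eq_of_adj_of_ncard_neighborSet_le_two {c f a b : V} (hc : (G.neighborSet c).ncard ≤ 2)
    (hf : G.Adj c f) (ha : G.Adj c a) (hb : G.Adj c b) (haf : a ≠ f) (hbf : b ≠ f) : a = b := by
  by_contra hab
  exact hc.not_gt ((Set.two_lt_ncard_iff (Set.toFinite _)).mpr
    ⟨f, a, b, hf, ha, hb, haf.symm, hbf.symm, hab⟩)

/-- At each step both paths must move to the unique neighbour other than the previous vertex. -/
theorem Walk.IsPath.support_subset_or_support_subset
    (hdeg : ∀ w, (G.neighborSet w).ncard ≤ 2) {c f x y : V} (hf : G.Adj c f)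
    {p : G.Walk c x} {q : G.Walk c y} (hp : p.IsPath) (hq : q.IsPath) (hfp : f ∉ p.support)
    (hfq : f ∉ q.support) : p.support ⊆ q.support ∨ q.support ⊆ p.support := by
  induction p generalizing f y with
  | nil => exact Or.inl (by simp)
  | cons ha p ih =>
    cases q with
    | nil => exact Or.inr (by simp)
    | cons hb q =>
      obtain rfl := eq_of_adj_of_ncard_neighborSet_le_two (hdeg _) hf ha hb
        (fun h => hfp (h ▸ List.mem_cons_of_mem _ p.start_mem_support))
        (fun h => hfq (h ▸ List.mem_cons_of_mem _ q.start_mem_support))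
      rw [Walk.cons_isPath_iff] at hp hq
      simp only [Walk.support_cons]
      exact (ih ha.symm hp.1 hq.1 hp.2 hq.2).imp (List.cons_subset_cons _)
        (List.cons_subset_cons _)

theorem subset_or_subset_of_induce_connected (hdeg : ∀ w, (G.neighborSet w).ncard ≤ 2)
    {c f : V} (hf : G.Adj c f) {A B : Set V} (hA : (G.induce A).Connected)
    (hB : (G.induce B).Connected) (hcA : c ∈ A) (hcB : c ∈ B) (hfA : f ∉ A) (hfB : f ∉ B) :
    A ⊆ B ∨ B ⊆ A := by
  by_contra! h
  obtain ⟨a, haA, haB⟩ := Set.not_subset.mp h.1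
  obtain ⟨b, hbB, hbA⟩ := Set.not_subset.mp h.2
  obtain ⟨p, hp, hpA⟩ := exists_isPath_of_induce_connected hA hcA haA
  obtain ⟨q, hq, hqB⟩ := exists_isPath_of_induce_connected hB hcB hbB
  rcases hp.support_subset_or_support_subset hdeg hf hq (fun h => hfA (hpA _ h))
      (fun h => hfB (hqB _ h)) with h | h
  · exact haB (hqB _ (h p.end_mem_support))
  · exact hbA (hpA _ (h q.end_mem_support))

theorem injOn_card_subtreesIn [Fintype V] [DecidableEq V]
    (hdeg : ∀ w, (G.neighborSet w).ncard ≤ 2) {c f : V} (hf : G.Adj c f) {S : Set V}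
    (hfS : f ∉ S) : Set.InjOn card (subtreesIn G S c : Set (Finset V)) := by
  intro A hA B hB hAB
  rw [mem_coe, mem_subtreesIn] at hA hB
  rcases subset_or_subset_of_induce_connected hdeg hf hA.2.2 hB.2.2 hA.1 hB.1
      (fun h => hfS (hA.2.1 h)) (fun h => hfS (hB.2.1 h)) with h | h
  · exact eq_of_subset_of_card_le (coe_subset.mp h) hAB.ge
  · exact (eq_of_subset_of_card_le (coe_subset.mp h) hAB.le).symm

end MaxDegreeTwo

theorem IsAcyclic.eq_penultimate_of_adj [DecidableEq V] (hG : G.IsAcyclic) {u w x : V}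
    {p : G.Walk u w} (hp : p.IsPath) (hx : x ∈ p.support) (hxw : G.Adj x w) :
    x = p.penultimate := by
  have hdrop : p.dropUntil x hx = .cons hxw .nil := by
    have := (hG.subsingleton_path x w).elim ⟨_, hp.dropUntil hx⟩ ⟨.cons hxw .nil, by simp [hxw.ne]⟩
    exact congrArg Subtype.val this
  rw [← p.take_spec hx, hdrop, ← Walk.concat_eq_append, Walk.penultimate_concat]

theorem IsAcyclic.exists_adj_ne_notMem_support [DecidableEq V] [Finite V] (hG : G.IsAcyclic)
    {v w : V} {r : G.Walk v w} (hr : r.IsPath) (hw : 2 < (G.neighborSet w).ncard) :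
    ∃ a b, a ≠ b ∧ G.Adj w a ∧ G.Adj w b ∧ a ∉ r.support ∧ b ∉ r.support := by
  have hcard : 1 < (G.neighborSet w \ {r.penultimate}).ncard := by
    have := Set.le_ncard_sdiff {r.penultimate} (G.neighborSet w)
    rw [Set.ncard_singleton] at this
    omega
  obtain ⟨a, b, ⟨ha, ha'⟩, ⟨hb, hb'⟩, hab⟩ := (Set.one_lt_ncard_iff (Set.toFinite _)).mp hcard
  exact ⟨a, b, hab, ha, hb, fun h => ha' (hG.eq_penultimate_of_adj hr h ha.symm),
    fun h => hb' (hG.eq_penultimate_of_adj hr h hb.symm)⟩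

theorem IsTree.not_injOn_card_subtreesIn [Fintype V] [DecidableEq V] (hG : G.IsTree) {u v w : V}
    (hN : G.neighborSet v = {u}) (hw : 2 < (G.neighborSet w).ncard) :
    ¬ Set.InjOn card (subtreesIn G {v}ᶜ u : Set (Finset V)) := by
  have hvw : v ≠ w := by rintro rfl; rw [hN, Set.ncard_singleton] at hw; omega
  obtain ⟨r, hr⟩ : ∃ r : G.Walk v w, r.IsPath :=
    ⟨_, (hG.connected.preconnected v w).some.bypass_isPath⟩
  obtain ⟨a, b, hab, ha, hb, har, hbr⟩ := hG.isAcyclic.exists_adj_ne_notMem_support hr hw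
  cases r with
  | nil => exact absurd rfl hvw
  | @cons _ y _ h q =>
    obtain rfl : u = y := ((adj_iff_of_neighborSet_eq_singleton hN).mp h).symm
    have hvq : v ∉ q.support := ((Walk.cons_isPath_iff h q).mp hr).2
    set P := q.support.toFinset
    have hP : (G.induce (P : Set V)).Connected := by
      rw [List.coe_toFinset]
      exact q.connected_induce_support
    have hmem : ∀ x, G.Adj w x → x ≠ v → insert x P ∈ subtreesIn G {v}ᶜ u := by
      intro x hx hxv
      refine mem_subtreesIn.mpr ⟨mem_insert_of_mem (List.mem_toFinset.mpr q.start_mem_support),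
        ?_, ?_⟩ <;> rw [coe_insert]
      · exact Set.insert_subset hxv fun y hy hyv => hvq (hyv ▸ List.mem_toFinset.mp hy)
      · exact induce_connected_insert hP (List.mem_toFinset.mpr q.end_mem_support) hx
    simp only [Walk.support_cons, List.mem_cons, not_or] at har hbr
    have haP : a ∉ P := fun h => har.2 (List.mem_toFinset.mp h)
    have hbP : b ∉ P := fun h => hbr.2 (List.mem_toFinset.mp h)
    intro hinj
    have hPab := hinj (hmem a ha har.1) (hmem b hb hbr.1)
      (by simp only [card_insert_of_notMem haP, card_insert_of_notMem hbP])
    rcases mem_insert.mp (hPab ▸ mem_insert_self a P) with h | h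
    exacts [hab h, haP h]

theorem IsTree.injOn_card_subtreesIn_iff [Fintype V] [DecidableEq V] (hG : G.IsTree) {u v : V}
    (hN : G.neighborSet v = {u}) :
    Set.InjOn card (subtreesIn G {v}ᶜ u : Set (Finset V)) ↔ ∀ w, (G.neighborSet w).ncard ≤ 2 := by
  refine ⟨fun hinj w => ?_, fun hdeg => ?_⟩
  · by_contra! hw
    exact hG.not_injOn_card_subtreesIn hN hw hinj
  · exact injOn_card_subtreesIn hdeg ((adj_iff_of_neighborSet_eq_singleton hN).mpr rfl).symm
      (Set.notMem_compl_iff.mpr rfl)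

section LeafSubtrees

variable [Fintype V] [DecidableEq V] {u v : V}

theorem erase_mem_subtreesIn_compl (hN : G.neighborSet v = {u}) {A : Finset V}
    (hA : (G.induce (A : Set V)).Connected) (hu : u ∈ A) : A.erase v ∈ subtreesIn G {v}ᶜ u := by
  have huv : u ≠ v := ((adj_iff_of_neighborSet_eq_singleton hN).mpr rfl).ne'
  refine mem_subtreesIn.mpr ⟨mem_erase.mpr ⟨huv, hu⟩, by simp, ?_⟩
  rw [coe_erase]
  exact induce_connected_diff_singleton_of_neighborSet_eq_singleton hN hA hu

theorem induce_connected_insert_of_mem_subtreesIn_compl (hN : G.neighborSet v = {u})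
    {B : Finset V} (hB : B ∈ subtreesIn G {v}ᶜ u) :
    (G.induce ((insert v B : Finset V) : Set V)).Connected :=
  coe_insert v B ▸ induce_connected_insert (mem_subtreesIn.mp hB).2.2 (mem_subtreesIn.mp hB).1
    ((adj_iff_of_neighborSet_eq_singleton hN).mpr rfl).symm

theorem subtrees_eq_union_image_insert (hN : G.neighborSet v = {u}) :
    subtrees G u = subtreesIn G {v}ᶜ u ∪ (subtreesIn G {v}ᶜ u).image (insert v) := by
  ext A
  simp only [mem_subtrees, mem_union, mem_image]
  constructor
  · rintro ⟨hu, hA⟩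
    by_cases hv : v ∈ A
    · exact Or.inr ⟨A.erase v, erase_mem_subtreesIn_compl hN hA hu, insert_erase hv⟩
    · exact Or.inl (mem_subtreesIn.mpr ⟨hu, by simpa using hv, hA⟩)
  · rintro (hA | ⟨B, hB, rfl⟩)
    · exact ⟨(mem_subtreesIn.mp hA).1, (mem_subtreesIn.mp hA).2.2⟩
    · exact ⟨mem_insert_of_mem (mem_subtreesIn.mp hB).1,
        induce_connected_insert_of_mem_subtreesIn_compl hN hB⟩

theorem subtrees_eq_insert_image_insert (hN : G.neighborSet v = {u}) :
    subtrees G v = insert {v} ((subtreesIn G {v}ᶜ u).image (insert v)) := by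
  ext A
  simp only [mem_subtrees, mem_insert, mem_image]
  constructor
  · rintro ⟨hv, hA⟩
    by_cases hAv : A = {v}
    · exact Or.inl hAv
    · obtain ⟨b, hb, hbv⟩ : ∃ b ∈ A, b ≠ v := by
        by_contra! h
        exact hAv (eq_singleton_iff_unique_mem.mpr ⟨hv, h⟩)
      have hu := mem_of_induce_connected_of_neighborSet_eq_singleton hN hA hv hb hbv
      exact Or.inr ⟨A.erase v, erase_mem_subtreesIn_compl hN hA hu, insert_erase hv⟩
  · rintro (rfl | ⟨B, hB, rfl⟩)
    · exact ⟨mem_singleton_self v, by rw [coe_singleton]; simp⟩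
    · exact ⟨mem_insert_self v B, induce_connected_insert_of_mem_subtreesIn_compl hN hB⟩

theorem meanOrder_sub_meanOrder_of_neighborSet_eq_singleton (hN : G.neighborSet v = {u}) :
    meanOrder G v - meanOrder G u =
      (((#(subtreesIn G {v}ᶜ u) * (#(subtreesIn G {v}ᶜ u) + 1) : ℕ) : ℝ) -
        ((2 * ∑ A ∈ subtreesIn G {v}ᶜ u, #A : ℕ) : ℝ)) /
      (2 * #(subtreesIn G {v}ᶜ u) * (#(subtreesIn G {v}ᶜ u) + 1)) := by
  set 𝒜 := subtreesIn G {v}ᶜ u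
  have huv : u ≠ v := ((adj_iff_of_neighborSet_eq_singleton hN).mpr rfl).ne'
  have hnot : ∀ A ∈ 𝒜, v ∉ A := fun A hA hv => (mem_subtreesIn.mp hA).2.1 hv rfl
  have hdisj : Disjoint 𝒜 (𝒜.image (insert v)) := by
    refine Finset.disjoint_left.mpr fun A hA hA' => ?_
    obtain ⟨B, -, rfl⟩ := mem_image.mp hA'
    exact hnot _ hA (mem_insert_self v B)
  have hsingleton : {v} ∉ 𝒜.image (insert v) := by
    simp only [mem_image, not_exists, not_and]
    intro B hB hBv
    exact huv (mem_singleton.mp (hBv ▸ mem_insert_of_mem (mem_subtreesIn.mp hB).1))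
  have hM : (0 : ℝ) < #𝒜 := by
    exact_mod_cast card_pos.mpr ⟨{u}, singleton_mem_subtreesIn huv⟩
  have hcard := card_image_of_injOn (injOn_insert_of_forall_notMem hnot)
  have hsum := sum_card_image_insert_of_forall_notMem hnot
  simp only [meanOrder, ← Nat.cast_sum]
  rw [subtrees_eq_union_image_insert hN, subtrees_eq_insert_image_insert hN,
    card_union_of_disjoint hdisj, sum_union hdisj, card_insert_of_notMem hsingleton,
    sum_insert hsingleton, hcard, hsum, card_singleton]
  push_cast
  field_simp
  ring

end LeafSubtrees

end SimpleGraph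

/-- If `v` is a leaf of a tree `T` with neighbour `u`, then
`μ(T; v) ≥ μ(T; u)`, with equality iff `T` is a path. -/
theorem leaf_meanOrder_ge {V : Type*} [Fintype V] [DecidableEq V]
    (G : SimpleGraph V) (hG : G.IsTree) (v u : V) (hv : (G.neighborSet v).ncard = 1)
    (huv : G.Adj v u) :
    meanOrder G v ≥ meanOrder G u ∧ (meanOrder G v = meanOrder G u ↔ IsPathGraph G) := by
  have hN : G.neighborSet v = {u} :=
    (Set.eq_of_subset_of_ncard_le (t := G.neighborSet v) (Set.singleton_subset_iff.mpr huv)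
      (by rw [hv, Set.ncard_singleton])).symm
  set 𝒜 := subtreesIn G {v}ᶜ u
  have hconn : (G.induce (({v}ᶜ : Finset V) : Set V)).Connected := by
    rw [coe_compl, coe_singleton, Set.compl_eq_univ_sdiff]
    exact SimpleGraph.induce_connected_diff_singleton_of_neighborSet_eq_singleton hN
      ((SimpleGraph.induceUnivIso G).connected_iff.mpr hG.connected) (Set.mem_univ u)
  have himage : 𝒜.image card = Icc 1 #({v}ᶜ : Finset V) := by
    simpa using SimpleGraph.image_card_subtreesIn hconn (mem_compl.mpr (by simpa using huv.ne'))
  have hM : (0 : ℝ) < #𝒜 := by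
    exact_mod_cast card_pos.mpr
      ⟨{u}, SimpleGraph.singleton_mem_subtreesIn (by simpa using huv.ne')⟩
  have hden : (0 : ℝ) < 2 * #𝒜 * (#𝒜 + 1) := by positivity
  rw [ge_iff_le, ← sub_nonneg, ← sub_eq_zero,
    SimpleGraph.meanOrder_sub_meanOrder_of_neighborSet_eq_singleton hN, IsPathGraph,
    and_iff_right hG, ← hG.injOn_card_subtreesIn_iff hN,
    ← two_mul_sum_eq_iff_injOn_of_image_eq_Icc himage, div_eq_zero_iff, or_iff_left hden.ne',
    sub_eq_zero, Nat.cast_inj, eq_comm]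
  refine ⟨div_nonneg (sub_nonneg.mpr ?_) hden.le, Iff.rfl⟩
  exact_mod_cast two_mul_sum_le_of_image_eq_Icc himage
end

section
/- For any major k-clique C_1 of a k-tree T (i.e., a k-clique contained in at least 3 distinct (k+1)-cliques of T), there exists a k-clique C_2 adjacent to C_1 such that μ(T; C_2) > μ(T; C_1). -/
open Finset

variable {V : Type*}

/-- `IsKTreeOn G k s` : the induced subgraph of `G` on the vertex set `s` is a `k`-tree,
following the recursive definition: `K_k` is a `k`-tree, and a `k`-tree grows by adding a
new vertex adjacent exactly to the vertices of some `k`-clique. -/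
inductive IsKTreeOn [DecidableEq V] (G : SimpleGraph V) (k : ℕ) : Finset V → Prop
  | base (s : Finset V) : G.IsNClique k s → IsKTreeOn G k s
  | grow (s : Finset V) (v : V) (C : Finset V) :
      IsKTreeOn G k s → v ∉ s → C ⊆ s → G.IsNClique k C →
      (∀ w ∈ s, G.Adj v w ↔ w ∈ C) → IsKTreeOn G k (insert v s)

/-- `G` is a `k`-tree. -/
def IsKTree [Fintype V] [DecidableEq V] (G : SimpleGraph V) (k : ℕ) : Prop :=
  IsKTreeOn G k Finset.univ

/-- The vertex sets of the sub-`k`-trees of `G` containing the `k`-clique `C`. -/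
noncomputable def subKTrees [Fintype V] [DecidableEq V] (G : SimpleGraph V) (k : ℕ)
    (C : Finset V) : Finset (Finset V) := by
  classical
  exact Finset.univ.filter fun A => C ⊆ A ∧ IsKTreeOn G k A

/-- The local mean order `μ(T; C)`: the average order of the sub-`k`-trees of `G`
containing the `k`-clique `C`. -/
noncomputable def kMean [Fintype V] [DecidableEq V] (G : SimpleGraph V) (k : ℕ)
    (C : Finset V) : ℝ :=
  (∑ A ∈ subKTrees G k C, (A.card : ℝ)) / ((subKTrees G k C).card : ℝ)

/-- The degree of a `k`-clique `C` in `G`: the number of `(k+1)`-cliques of `G`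
containing `C`. -/
noncomputable def cliqueDeg [Fintype V] [DecidableEq V] (G : SimpleGraph V) (k : ℕ)
    (C : Finset V) : ℕ := by
  classical
  exact (Finset.univ.filter fun Q : Finset V => C ⊆ Q ∧ G.IsNClique (k + 1) Q).card

/-- Two (distinct) `k`-cliques are adjacent if they are contained in a common
`(k+1)`-clique. -/
def CliqueAdj (G : SimpleGraph V) (k : ℕ) (C₁ C₂ : Finset V) : Prop :=
  C₁ ≠ C₂ ∧ ∃ Q : Finset V, G.IsNClique (k + 1) Q ∧ C₁ ⊆ Q ∧ C₂ ⊆ Q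

/-- `IsPathTypeOn G k s` : the induced subgraph of `G` on `s` is a path-type `k`-tree:
`K_k` and `K_{k+1}` are path-type, and a path-type `k`-tree of order `≥ k+1` grows by
joining a new vertex to a simplicial `k`-clique (a `k`-clique containing a vertex of
degree `k`). -/
inductive IsPathTypeOn [DecidableEq V] (G : SimpleGraph V) (k : ℕ) : Finset V → Prop
  | base₁ (s : Finset V) : G.IsNClique k s → IsPathTypeOn G k s
  | base₂ (s : Finset V) : G.IsNClique (k + 1) s → IsPathTypeOn G k s
  | grow (s : Finset V) (v : V) (C : Finset V) :
      IsPathTypeOn G k s → k + 1 ≤ s.card → v ∉ s → C ⊆ s → G.IsNClique k C →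
      (∃ ℓ ∈ C, (G.neighborSet ℓ ∩ (↑s : Set V)).ncard = k) →
      (∀ w ∈ s, G.Adj v w ↔ w ∈ C) → IsPathTypeOn G k (insert v s)


/-!
Root `T` at `C₁`. The sub-`k`-trees containing `C₁` are the sets `C₁ ∪ ρ₁ ∪ ρ₂ ∪ ρ₃`, with `ρᵢ`
ranging independently over the extensions of `C₁` inside `Uᵢ`, where `U₁, U₂` are the components
of `T - C₁` of two apexes `v₁, v₂` of `C₁` and `U₃` is the rest of `T - C₁`. Hence
`μ(T; C₁) = k + a₁ + a₂ + a₃`, with `aᵢ` the mean order of the `fᵢ` extensions in `Uᵢ`; these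
families are accessible, so `2aᵢ ≤ fᵢ - 1`. Choose `v₁` among three apexes with `f₁ = r + 1`
minimal. Every nonempty extension in `U₁` contains `v₁`, so `a₁ = b·r/(r+1)`, where `b` is the
mean order of the other `r`. For `u ∈ C₁` let `C₂ = C₁ - u + v₁`. The sub-`k`-trees containing
`C₂` and `u` are those containing `C₁ ∪ {v₁}`, of mean order `k + b + a₂ + a₃`. The others lie in
`C₂ ∪ U₁`, and adding `u` turns each into `C₁` plus an extension in `U₁` containing `v₁`, so there
are at most `r` of them. As `f₂, f₃ ≥ r + 1`, this puts `μ(T; C₂)` above `μ(T; C₁)`.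
-/

section Growth

variable [DecidableEq V] {G : SimpleGraph V} {k : ℕ}

inductive GrowsFrom (G : SimpleGraph V) (k : ℕ) (D : Finset V) : Finset V → Prop
  | refl : GrowsFrom G k D D
  | grow {s : Finset V} {v : V} {C : Finset V} : GrowsFrom G k D s → v ∉ s → C ⊆ s →
      G.IsNClique k C → (∀ w ∈ s, G.Adj v w ↔ w ∈ C) → GrowsFrom G k D (insert v s)

namespace GrowsFrom

variable {D A : Finset V}

theorem subset (h : GrowsFrom G k D A) : D ⊆ A := by
  induction h with
  | refl => exact Subset.rfl
  | grow _ _ _ _ _ ih => exact ih.trans (subset_insert _ _)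

theorem isKTreeOn (hD : G.IsNClique k D) (h : GrowsFrom G k D A) : IsKTreeOn G k A := by
  induction h with
  | refl => exact .base D hD
  | grow _ hv hC hcl hadj ih => exact .grow _ _ _ ih hv hC hcl hadj

theorem union {E s t : Finset V} (hs : GrowsFrom G k D s) (ht : GrowsFrom G k E t)
    (hEs : E ⊆ s) (hdisj : Disjoint (t \ E) s) (hsep : ∀ x ∈ t \ E, ∀ y ∈ s \ E, ¬ G.Adj x y) :
    GrowsFrom G k D (s ∪ t) := by
  induction ht with
  | refl => rwa [union_eq_left.2 hEs]
  | @grow t v C ht hv hCt hcl hadj ih =>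
    have hEt := ht.subset
    have hvE : v ∈ insert v t \ E := mem_sdiff.2 ⟨mem_insert_self v t, fun h => hv (hEt h)⟩
    have hvs : v ∉ s := disjoint_left.1 hdisj hvE
    rw [union_insert]
    refine (ih (disjoint_of_subset_left (sdiff_subset_sdiff (subset_insert v t) le_rfl) hdisj)
      (fun x hx => hsep x (sdiff_subset_sdiff (subset_insert v t) le_rfl hx))).grow
      (by simp [hvs, hv]) (hCt.trans subset_union_right) hcl fun w hw => ?_
    by_cases hwt : w ∈ t
    · exact hadj w hwt
    · have hws : w ∈ s \ E := mem_sdiff.2 ⟨(mem_union.1 hw).resolve_right hwt, fun h => hwt (hEt h)⟩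
      exact iff_of_false (hsep v hvE w hws) fun h => hwt (hCt h)

theorem sdiff {U : Finset V} (h : GrowsFrom G k D A) (hUD : Disjoint U D)
    (hU : ∀ x ∈ U, ∀ y ∈ A, G.Adj x y → y ∈ U ∨ y ∈ D) : GrowsFrom G k D (A \ U) := by
  induction h with
  | refl => rw [sdiff_eq_self_of_disjoint hUD.symm]; exact .refl
  | @grow s v C hs hv hCs hcl hadj ih =>
    have ih := ih fun x hx y hy => hU x hx y (mem_insert_of_mem hy)
    by_cases hvU : v ∈ U
    · rwa [insert_sdiff_of_mem _ hvU]
    · rw [insert_sdiff_of_notMem _ hvU]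
      refine ih.grow (fun h => hv (mem_sdiff.1 h).1) (fun x hx => mem_sdiff.2 ⟨hCs hx, ?_⟩) hcl
        fun w hw => hadj w (mem_sdiff.1 hw).1
      intro hxU
      rcases hU x hxU v (mem_insert_self v s) ((hadj x (hCs hx)).2 hx).symm with h | h
      exacts [hvU h, hv (hs.subset h)]

theorem exists_erase (h : GrowsFrom G k D A) (hA : A ≠ D) :
    ∃ x ∈ A \ D, GrowsFrom G k D (A.erase x) := by
  cases h with
  | refl => exact absurd rfl hA
  | @grow s v _ hs hv _ _ _ =>
    exact ⟨v, mem_sdiff.2 ⟨mem_insert_self v s, fun h => hv (hs.subset h)⟩,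
      by rwa [erase_insert hv]⟩

end GrowsFrom

theorem SimpleGraph.IsNClique.growsFrom {D Q : Finset V} (hQ : G.IsNClique (k + 1) Q)
    (hDQ : D ⊆ Q) (hD : D.card = k) : GrowsFrom G k D Q := by
  obtain ⟨z, hzD, rfl⟩ := exists_eq_insert_iff.2 ⟨hDQ, by rw [hD, hQ.2]⟩
  refine GrowsFrom.refl.grow hzD Subset.rfl ⟨hQ.1.subset (by simp), hD⟩ fun w hw =>
    ⟨fun _ => hw, fun _ => hQ.1 (mem_insert_self z D) (mem_insert_of_mem hw) ?_⟩
  rintro rfl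
  exact hzD hw

theorem IsKTreeOn.growsFrom {D A : Finset V} (h : IsKTreeOn G k A) (hDA : D ⊆ A)
    (hD : G.IsNClique k D) : GrowsFrom G k D A := by
  induction h generalizing D with
  | base s hs =>
    rw [eq_of_subset_of_card_le hDA (by rw [hs.2, hD.2])]
    exact .refl
  | grow s v C _ hv hCs hcl hadj ih =>
    by_cases hvD : v ∈ D
    -- grow the `(k+1)`-clique `insert v C` from `D`, then glue on `s`, grown from `C`
    · have hQ : G.IsNClique (k + 1) (insert v C) :=
        hcl.insert fun b hb => (hadj b (hCs hb)).2 hb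
      have hDQ : D ⊆ insert v C := by
        intro x hx
        by_cases hxv : x = v
        · exact hxv ▸ mem_insert_self v C
        · have hxs : x ∈ s := (mem_insert.1 (hDA hx)).resolve_left hxv
          exact mem_insert_of_mem ((hadj x hxs).1 (hD.1 hvD hx (Ne.symm hxv)))
      have := (hQ.growsFrom hDQ hD.2).union (ih hCs hcl) (subset_insert v C)
        (disjoint_left.2 fun x hx hxQ => by
          obtain ⟨hxs, hxC⟩ := mem_sdiff.1 hx
          rcases mem_insert.1 hxQ with rfl | h
          exacts [hv hxs, hxC h])
        (fun x hx y hy hxy => by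
          obtain ⟨hxs, hxC⟩ := mem_sdiff.1 hx
          obtain rfl : y = v := by
            obtain ⟨hy, hyC⟩ := mem_sdiff.1 hy
            exact (mem_insert.1 hy).resolve_right hyC
          exact hxC ((hadj x hxs).1 hxy.symm))
      rwa [insert_union, union_eq_right.2 hCs] at this
    · exact (ih (fun x hx => (mem_insert.1 (hDA hx)).resolve_left (ne_of_mem_of_not_mem hx hvD))
        hD).grow hv hCs hcl hadj

theorem mem_subKTrees_iff [Fintype V] {C A : Finset V} (hC : G.IsNClique k C) :
    A ∈ subKTrees G k C ↔ GrowsFrom G k C A := by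
  simp only [subKTrees, mem_filter, mem_univ, true_and]
  exact ⟨fun h => h.2.growsFrom h.1 hC, fun h => ⟨h.subset, h.isKTreeOn hC⟩⟩

end Growth

section Reachability

variable {G : SimpleGraph V} {S T : Finset V} {a b c : V}

inductive ReachableIn (G : SimpleGraph V) (S : Finset V) : V → V → Prop
  | refl {a : V} : a ∈ S → ReachableIn G S a a
  | cons {a b c : V} : a ∈ S → G.Adj a b → ReachableIn G S b c → ReachableIn G S a c

namespace ReachableIn

theorem left_mem (h : ReachableIn G S a c) : a ∈ S := by
  cases h <;> assumption

theorem right_mem (h : ReachableIn G S a c) : c ∈ S := by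
  induction h with
  | refl h => exact h
  | cons _ _ _ ih => exact ih

theorem of_adj (ha : a ∈ S) (hc : c ∈ S) (hac : G.Adj a c) : ReachableIn G S a c :=
  .cons ha hac (.refl hc)

theorem trans (h : ReachableIn G S a b) (h' : ReachableIn G S b c) : ReachableIn G S a c := by
  induction h with
  | refl => exact h'
  | cons ha hab _ ih => exact .cons ha hab (ih h')

theorem symm (h : ReachableIn G S a c) : ReachableIn G S c a := by
  induction h with
  | refl h => exact .refl h
  | cons ha hab hbc ih => exact ih.trans (of_adj hbc.left_mem ha hab.symm)

theorem mono (hST : S ⊆ T) (h : ReachableIn G S a c) : ReachableIn G T a c := by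
  induction h with
  | refl h => exact .refl (hST h)
  | cons ha hab _ ih => exact .cons (hST ha) hab ih

variable [DecidableEq V]

theorem erase {v : V} (h : ReachableIn G S a c) (hv : ¬ ReachableIn G S a v) :
    ReachableIn G (S.erase v) a c := by
  induction h with
  | refl ha => exact .refl (mem_erase.2 ⟨fun h => hv (h ▸ .refl ha), ha⟩)
  | cons ha hab _ ih =>
    exact .cons (mem_erase.2 ⟨fun h => hv (h ▸ .refl ha), ha⟩) hab
      (ih fun h => hv (.cons ha hab h))

theorem of_insert {x : V}
    (hx : ∀ p ∈ S, ∀ q ∈ S, G.Adj x p → G.Adj x q → p ≠ q → G.Adj p q)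
    (h : ReachableIn G (insert x S) a c) (ha : a ≠ x) (hc : c ≠ x) : ReachableIn G S a c := by
  suffices (a ≠ x → ReachableIn G S a c) ∧ (a = x → ∀ p ∈ S, G.Adj x p → ReachableIn G S p c) from
    this.1 ha
  clear ha
  induction h with
  | refl ha =>
    exact ⟨fun hax => .refl ((mem_insert.1 ha).resolve_left hax), fun hax => absurd hax hc⟩
  | @cons a b c ha hab hbc ih =>
    obtain ⟨ih₁, ih₂⟩ := ih hc
    refine ⟨fun hax => ?_, ?_⟩
    · have ha' := (mem_insert.1 ha).resolve_left hax
      by_cases hbx : b = x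
      · exact ih₂ hbx a ha' (hbx ▸ hab.symm)
      · exact .cons ha' hab (ih₁ hbx)
    · rintro rfl p hp hap
      have hba : b ≠ a := hab.ne.symm
      have hb := (mem_insert.1 hbc.left_mem).resolve_left hba
      by_cases hpb : p = b
      · exact hpb ▸ ih₁ hba
      · exact .cons hp (hx p hp b hb hap hab hpb) (ih₁ hba)

end ReachableIn

end Reachability

section Apex

variable [DecidableEq V] {G : SimpleGraph V} {k : ℕ} {C D A : Finset V} {u v z z' w : V}

/-- The apexes `z` of a `k`-clique `D` correspond to the `(k+1)`-cliques `insert z D ⊇ D`. -/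
def IsApex (G : SimpleGraph V) (D : Finset V) (z : V) : Prop :=
  z ∉ D ∧ ∀ c ∈ D, G.Adj z c

namespace GrowsFrom

theorem eq_of_reachableIn (h : GrowsFrom G k D A) (hD : D.card = k) (hz : IsApex G D z)
    (hz' : IsApex G D z') (hzz' : ReachableIn G (A \ D) z z') : z = z' := by
  induction h generalizing z z' with
  | refl => simpa using hzz'.left_mem
  | @grow s x C hs hx hCs hcl hadj ih =>
    -- an apex glued in the last step was glued onto `D` itself, so it is isolated in `A \ D`
    have isolated : ∀ {y y'}, IsApex G D y → y = x → ReachableIn G (insert x s \ D) y y' →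
        y = y' := by
      rintro y y' hy rfl hyy'
      have hCD : C = D := (eq_of_subset_of_card_le
        (fun c hc => (hadj c (hs.subset hc)).1 (hy.2 c hc)) (by rw [hD, hcl.2])).symm
      cases hyy' with
      | refl => rfl
      | @cons _ b _ _ hyb hbc =>
        obtain ⟨hb, hbD⟩ := mem_sdiff.1 hbc.left_mem
        have hbs := (mem_insert.1 hb).resolve_left hyb.ne.symm
        exact absurd (hCD ▸ (hadj b hbs).1 hyb) hbD
    by_cases hzx : z = x
    · exact isolated hz hzx hzz'
    by_cases hz'x : z' = x
    · exact (isolated hz' hz'x hzz'.symm).symm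
    refine ih hz hz' (ReachableIn.of_insert (fun p hp q hq hxp hxq hpq => ?_)
      (hzz'.mono ?_) hzx hz'x)
    · exact hcl.1 ((hadj p (mem_sdiff.1 hp).1).1 hxp) ((hadj q (mem_sdiff.1 hq).1).1 hxq) hpq
    · intro y hy
      obtain ⟨hy, hyD⟩ := mem_sdiff.1 hy
      rcases mem_insert.1 hy with rfl | hy
      exacts [mem_insert_self y _, mem_insert_of_mem (mem_sdiff.2 ⟨hy, hyD⟩)]

theorem exists_apex_reachableIn (h : GrowsFrom G k D A) (hD : D.card = k) (hw : w ∈ A \ D) :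
    ∃ z, IsApex G D z ∧ ReachableIn G (A \ D) z w := by
  induction h generalizing w with
  | refl => simp at hw
  | @grow s x C hs hx hCs hcl hadj ih =>
    have hmono : s \ D ⊆ insert x s \ D := sdiff_subset_sdiff (subset_insert x s) le_rfl
    have hwD := (mem_sdiff.1 hw).2
    rcases mem_insert.1 (mem_sdiff.1 hw).1 with rfl | hws
    · by_cases hCD : C = D
      · subst hCD
        exact ⟨w, ⟨hwD, fun c hc => (hadj c (hCs hc)).2 hc⟩, .refl hw⟩
      · obtain ⟨y, hyC, hyD⟩ := not_subset.1 fun hCD' : C ⊆ D =>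
          hCD (eq_of_subset_of_card_le hCD' (by rw [hD, hcl.2]))
        obtain ⟨z, hz, hzy⟩ := ih (mem_sdiff.2 ⟨hCs hyC, hyD⟩)
        exact ⟨z, hz, (hzy.mono hmono).trans (.of_adj (hmono (mem_sdiff.2 ⟨hCs hyC, hyD⟩))
          hw ((hadj y (hCs hyC)).2 hyC).symm)⟩
    · obtain ⟨z, hz, hzw⟩ := ih (mem_sdiff.2 ⟨hws, hwD⟩)
      exact ⟨z, hz, hzw.mono hmono⟩

theorem apex_mem [Fintype V] (huniv : GrowsFrom G k D univ) (h : GrowsFrom G k D A)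
    (hD : D.card = k) (hz : IsApex G D z) (hw : w ∈ A \ D) (hzw : ReachableIn G Dᶜ z w) :
    z ∈ A := by
  obtain ⟨z', hz', hz'w⟩ := h.exists_apex_reachableIn hD hw
  have hmono : A \ D ⊆ univ \ D := sdiff_subset_sdiff (subset_univ A) le_rfl
  rw [compl_eq_univ_sdiff] at hzw
  obtain rfl := huniv.eq_of_reachableIn hD hz' hz ((hz'w.mono hmono).trans hzw.symm)
  exact (mem_sdiff.1 hz'w.left_mem).1

end GrowsFrom

theorem isNClique_swap (hC : G.IsNClique k C) (hv : IsApex G C v) (hu : u ∈ C) :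
    G.IsNClique k (insert v (C.erase u)) :=
  hC.insert_erase (fun w hw => hv.2 w (mem_sdiff.1 hw).1) hu

theorem cliqueAdj_swap (hC : G.IsNClique k C) (hv : IsApex G C v) :
    CliqueAdj G k C (insert v (C.erase u)) :=
  ⟨fun h => hv.1 (h ▸ mem_insert_self _ _), insert v C, hC.insert hv.2, subset_insert _ _,
    insert_subset_insert _ (erase_subset _ _)⟩

theorem isApex_swap (hC : G.IsNClique k C) (hv : IsApex G C v) (hu : u ∈ C) :
    IsApex G (insert v (C.erase u)) u := by
  refine ⟨?_, fun c hc => ?_⟩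
  · simp only [mem_insert, mem_erase, ne_eq, not_true_eq_false, false_and, or_false]
    rintro rfl
    exact hv.1 hu
  · rcases mem_insert.1 hc with rfl | hc
    · exact (hv.2 u hu).symm
    · exact hC.1 hu (mem_of_mem_erase hc) (ne_of_mem_erase hc).symm

end Apex

section Families

open scoped FinsetFamily

variable {α : Type*} {S F H : Finset (Finset α)}

/-- Junk value `0` on the empty family. -/
noncomputable def avgCard (F : Finset (Finset α)) : ℝ :=
  (∑ ρ ∈ F, (#ρ : ℝ)) / #F

theorem avgCard_mul_card (F : Finset (Finset α)) : avgCard F * #F = ∑ ρ ∈ F, (#ρ : ℝ) := by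
  obtain rfl | hF := F.eq_empty_or_nonempty
  · simp
  · exact div_mul_cancel₀ _ (by exact_mod_cast hF.card_pos.ne')

theorem avgCard_nonneg (F : Finset (Finset α)) : 0 ≤ avgCard F := by
  unfold avgCard; positivity

theorem avgCard_singleton (s : Finset α) : avgCard {s} = #s := by
  simp [avgCard]

theorem mul_card_le_avgCard_mul_card {n : ℕ} (h : ∀ ρ ∈ F, n ≤ #ρ) :
    (n : ℝ) * #F ≤ avgCard F * #F := by
  rw [avgCard_mul_card, mul_comm, ← nsmul_eq_mul, ← sum_const]
  exact sum_le_sum fun ρ hρ => by exact_mod_cast h ρ hρ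

variable [DecidableEq α]

theorem one_le_avgCard_filter_mem {v : α} (hne : (F.filter (v ∈ ·)).Nonempty) :
    1 ≤ avgCard (F.filter (v ∈ ·)) := by
  have h := mul_card_le_avgCard_mul_card (F := F.filter (v ∈ ·)) (n := 1)
    fun ρ hρ => card_pos.2 ⟨v, (mem_filter.1 hρ).2⟩
  rw [Nat.cast_one] at h
  exact le_of_mul_le_mul_right h (by exact_mod_cast hne.card_pos)

def IsAccessible (S : Finset (Finset α)) : Prop :=
  ∀ ρ ∈ S, ρ.Nonempty → ∃ x ∈ ρ, ρ.erase x ∈ S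

namespace IsAccessible

/-- A member `ρ` is the top of a chain `∅ ⊂ ⋯ ⊂ ρ` of `#ρ + 1` members. -/
theorem card_lt (hS : IsAccessible S) {ρ : Finset α} (hρ : ρ ∈ S) : #ρ < #S := by
  suffices ∀ ρ ∈ S, #ρ < #(S.filter (· ⊆ ρ)) from
    (this ρ hρ).trans_le (card_filter_le _ _)
  intro ρ
  induction ρ using Finset.strongInduction with
  | H ρ ih =>
    intro hρ
    obtain rfl | hne := ρ.eq_empty_or_nonempty
    · exact card_pos.2 ⟨∅, mem_filter.2 ⟨hρ, Subset.rfl⟩⟩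
    obtain ⟨x, hx, hxS⟩ := hS ρ hρ hne
    have hlt : S.filter (· ⊆ ρ.erase x) ⊂ S.filter (· ⊆ ρ) :=
      (ssubset_iff_of_subset fun τ hτ => mem_filter.2
          ⟨(mem_filter.1 hτ).1, (mem_filter.1 hτ).2.trans (erase_subset x ρ)⟩).2
        ⟨ρ, mem_filter.2 ⟨hρ, Subset.rfl⟩, fun h => notMem_erase x ρ ((mem_filter.1 h).2 hx)⟩
    have := ih (ρ.erase x) (erase_ssubset hx) hxS
    rw [← card_erase_add_one hx]
    exact (Nat.succ_le_of_lt this).trans_lt (card_lt_card hlt)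

theorem erase_of_forall_card_le (hS : IsAccessible S) {σ : Finset α}
    (hσ : ∀ ρ ∈ S, #ρ ≤ #σ) : IsAccessible (S.erase σ) := by
  intro ρ hρ hne
  obtain ⟨hρσ, hρS⟩ := mem_erase.1 hρ
  obtain ⟨x, hx, hxS⟩ := hS ρ hρS hne
  refine ⟨x, hx, mem_erase.2 ⟨fun h => ?_, hxS⟩⟩
  have := hσ ρ hρS
  rw [← h, card_erase_of_mem hx] at this
  have := card_pos.2 ⟨x, hx⟩
  omega

theorem sum_card_le_choose_two (hS : IsAccessible S) : ∑ ρ ∈ S, #ρ ≤ (#S).choose 2 := by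
  induction S using Finset.strongInduction with
  | H S ih =>
    obtain rfl | hne := S.eq_empty_or_nonempty
    · simp
    obtain ⟨σ, hσS, hσ⟩ := exists_max_image S card hne
    have h := ih _ (erase_ssubset hσS) (hS.erase_of_forall_card_le hσ)
    have hσ' := hS.card_lt hσS
    rw [← card_erase_add_one hσS] at hσ' ⊢
    have hchoose : (#(S.erase σ) + 1).choose 2 = #(S.erase σ) + (#(S.erase σ)).choose 2 := by
      simpa using Nat.choose_succ_succ' (#(S.erase σ)) 1
    rw [← sum_erase_add S _ hσS, hchoose]
    omega

theorem two_mul_avgCard_le (hS : IsAccessible S) (hne : S.Nonempty) :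
    2 * avgCard S ≤ #S - 1 := by
  have hpos : (0 : ℝ) < #S := by exact_mod_cast hne.card_pos
  have h : (∑ ρ ∈ S, #ρ : ℝ) ≤ #S * (#S - 1) / 2 := by
    rw [← Nat.cast_choose_two]; exact_mod_cast hS.sum_card_le_choose_two
  rw [avgCard, ← mul_div_assoc, div_le_iff₀ hpos]
  nlinarith

end IsAccessible

theorem avgCard_insert_empty (h : ∅ ∉ S) :
    avgCard (insert ∅ S) = avgCard S * (#S / (#S + 1)) := by
  rw [avgCard, sum_insert h, card_insert_of_notMem h, ← avgCard_mul_card]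
  push_cast
  simp only [card_empty, CharP.cast_eq_zero, zero_add]
  ring

theorem avgCard_union (h : Disjoint F H) :
    avgCard (F ∪ H) = (avgCard F * #F + avgCard H * #H) / (#F + #H) := by
  rw [avgCard, sum_union h, card_union_of_disjoint h, avgCard_mul_card, avgCard_mul_card]
  push_cast
  rfl

theorem injOn_sup_of_subset_powerset {U W : Finset α} (hF : F ⊆ U.powerset)
    (hH : H ⊆ W.powerset) (hUW : Disjoint U W) :
    Set.InjOn (fun p : Finset α × Finset α => p.1 ⊔ p.2) (↑F ×ˢ ↑H) := by
  have key : ∀ p ∈ (↑F ×ˢ ↑H : Set _), (p.1 ⊔ p.2) ∩ U = p.1 ∧ (p.1 ⊔ p.2) ∩ W = p.2 := by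
    rintro ⟨ρ, τ⟩ ⟨hρ, hτ⟩
    have hρ := mem_powerset.1 (hF hρ)
    have hτ := mem_powerset.1 (hH hτ)
    simp only [sup_eq_union, union_inter_distrib_right, inter_eq_left.2 hρ, inter_eq_left.2 hτ,
      disjoint_iff_inter_eq_empty.1 (hUW.mono_left hρ),
      disjoint_iff_inter_eq_empty.1 (hUW.symm.mono_left hτ), union_empty, empty_union, and_self]
  intro p hp q hq hpq
  have hp := key p hp
  have hq := key q hq
  simp only at hpq
  exact Prod.ext (hp.1.symm.trans (hpq ▸ hq.1)) (hp.2.symm.trans (hpq ▸ hq.2))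

theorem card_sups_of_subset_powerset {U W : Finset α} (hF : F ⊆ U.powerset)
    (hH : H ⊆ W.powerset) (hUW : Disjoint U W) : #(F ⊻ H) = #F * #H :=
  (card_sups_iff F H).2 (injOn_sup_of_subset_powerset hF hH hUW)

theorem avgCard_sups_of_subset_powerset {U W : Finset α} (hF : F ⊆ U.powerset)
    (hH : H ⊆ W.powerset) (hUW : Disjoint U W) (hFne : F.Nonempty) (hHne : H.Nonempty) :
    avgCard (F ⊻ H) = avgCard F + avgCard H := by
  have hsum : ∑ ρ ∈ F ⊻ H, (#ρ : ℝ) = #H * ∑ ρ ∈ F, (#ρ : ℝ) + #F * ∑ τ ∈ H, (#τ : ℝ) := by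
    change ∑ ρ ∈ image₂ (· ⊔ ·) F H, (#ρ : ℝ) = _
    rw [← image_uncurry_product, sum_image (by
      rw [coe_product]; exact injOn_sup_of_subset_powerset hF hH hUW), sum_product]
    simp only [Function.uncurry_apply_pair, sup_eq_union]
    rw [sum_congr rfl fun ρ hρ => sum_congr rfl fun τ hτ => by
      rw [card_union_of_disjoint ((hUW.mono_left (mem_powerset.1 (hF hρ))).mono_right
        (mem_powerset.1 (hH hτ)))]]
    simp only [Nat.cast_add, sum_add_distrib, sum_const, nsmul_eq_mul, mul_sum]
  have hF0 : (#F : ℝ) ≠ 0 := by exact_mod_cast hFne.card_pos.ne'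
  have hH0 : (#H : ℝ) ≠ 0 := by exact_mod_cast hHne.card_pos.ne'
  rw [avgCard, hsum, card_sups_of_subset_powerset hF hH hUW, avgCard, avgCard]
  push_cast
  field_simp

theorem sups_subset_powerset_union {U W : Finset α} (hF : F ⊆ U.powerset)
    (hH : H ⊆ W.powerset) : F ⊻ H ⊆ (U ∪ W).powerset := by
  intro ρ hρ
  obtain ⟨a, ha, b, hb, rfl⟩ := mem_sups.1 hρ
  exact mem_powerset.2 (union_subset_union (mem_powerset.1 (hF ha)) (mem_powerset.1 (hH hb)))

theorem filter_mem_sups {v : α} (hv : ∀ τ ∈ H, v ∉ τ) :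
    (F ⊻ H).filter (v ∈ ·) = F.filter (v ∈ ·) ⊻ H := by
  ext ρ
  simp only [mem_filter, mem_sups, sup_eq_union]
  constructor
  · rintro ⟨⟨a, ha, b, hb, rfl⟩, hv'⟩
    exact ⟨a, ⟨ha, (mem_union.1 hv').resolve_right (hv b hb)⟩, b, hb, rfl⟩
  · rintro ⟨a, ⟨ha, hva⟩, b, hb, rfl⟩
    exact ⟨⟨a, ha, b, hb, rfl⟩, mem_union_left _ hva⟩

end Families

section Extensions

open scoped FinsetFamily

variable [DecidableEq V] {G : SimpleGraph V} {k : ℕ} {C U X : Finset V}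

/-- For `U` disjoint from `C`: `U` is a union of components of `G - C`. -/
def IsClosedOutside (G : SimpleGraph V) (C U : Finset V) : Prop :=
  ∀ x ∈ U, ∀ y, G.Adj x y → y ∉ C → y ∈ U

noncomputable def extensions (G : SimpleGraph V) (k : ℕ) (C U : Finset V) : Finset (Finset V) := by
  classical exact U.powerset.filter fun ρ => GrowsFrom G k C (C ∪ ρ)

theorem mem_extensions {ρ : Finset V} :
    ρ ∈ extensions G k C U ↔ ρ ⊆ U ∧ GrowsFrom G k C (C ∪ ρ) := by
  simp [extensions]

theorem extensions_subset_powerset : extensions G k C U ⊆ U.powerset :=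
  fun _ hρ => mem_powerset.2 (mem_extensions.1 hρ).1

theorem empty_mem_extensions : ∅ ∈ extensions G k C U :=
  mem_extensions.2 ⟨empty_subset U, by rw [union_empty]; exact .refl⟩

theorem extensions_mono {U' : Finset V} (h : U ⊆ U') :
    extensions G k C U ⊆ extensions G k C U' :=
  fun _ hρ => mem_extensions.2 ⟨(mem_extensions.1 hρ).1.trans h, (mem_extensions.1 hρ).2⟩

theorem isAccessible_extensions (hU : Disjoint U C) : IsAccessible (extensions G k C U) := by
  intro ρ hρ hne
  obtain ⟨hρU, hρ⟩ := mem_extensions.1 hρ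
  have hρC : Disjoint ρ C := hU.mono_left hρU
  obtain ⟨x, hx, hxρ⟩ := hρ.exists_erase fun h => by
    obtain ⟨y, hy⟩ := hne
    exact disjoint_left.1 hρC hy (h ▸ mem_union_right C hy)
  obtain ⟨hx, hxC⟩ := mem_sdiff.1 hx
  refine ⟨x, (mem_union.1 hx).resolve_left hxC, mem_extensions.2 ⟨(erase_subset x ρ).trans hρU, ?_⟩⟩
  rwa [erase_union_distrib, erase_eq_of_notMem hxC] at hxρ

theorem GrowsFrom.union_inter_of_isClosedOutside {ρ : Finset V} (hρ : GrowsFrom G k C (C ∪ ρ))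
    (hρC : Disjoint ρ C) (hU : IsClosedOutside G C U) : GrowsFrom G k C (C ∪ ρ ∩ U) := by
  have := hρ.sdiff (U := ρ \ U) (hρC.mono_left sdiff_subset) fun x hx y hy hxy => by
    obtain ⟨hxρ, hxU⟩ := mem_sdiff.1 hx
    rcases mem_union.1 hy with hyC | hyρ
    · exact .inr hyC
    · exact .inl (mem_sdiff.2 ⟨hyρ, fun hyU => hxU (hU y hyU x hxy.symm (disjoint_left.1 hρC hxρ))⟩)
  convert this using 1
  ext x
  have : x ∈ ρ → x ∉ C := fun h => disjoint_left.1 hρC h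
  simp only [mem_union, mem_inter, mem_sdiff]
  tauto

theorem GrowsFrom.union_sdiff_of_isClosedOutside {ρ : Finset V} (hρ : GrowsFrom G k C (C ∪ ρ))
    (hUC : Disjoint U C) (hU : IsClosedOutside G C U) : GrowsFrom G k C (C ∪ ρ \ U) := by
  have := hρ.sdiff (U := ρ ∩ U) (hUC.mono_left inter_subset_right) fun x hx y hy hxy => by
    obtain ⟨hxρ, hxU⟩ := mem_inter.1 hx
    by_cases hyC : y ∈ C
    · exact .inr hyC
    · exact .inl (mem_inter.2 ⟨(mem_union.1 hy).resolve_left hyC, hU x hxU y hxy hyC⟩)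
  convert this using 1
  ext x
  have : x ∈ U → x ∉ C := fun h => disjoint_left.1 hUC h
  simp only [mem_union, mem_inter, mem_sdiff]
  tauto

theorem GrowsFrom.union_union_of_isClosedOutside {ρ τ : Finset V} (hρ : GrowsFrom G k C (C ∪ ρ))
    (hτ : GrowsFrom G k C (C ∪ τ)) (hρU : ρ ⊆ U) (hτU : Disjoint τ U)
    (hU : IsClosedOutside G C U) : GrowsFrom G k C (C ∪ (ρ ∪ τ)) := by
  have hτ' : ∀ x ∈ (C ∪ τ) \ C, x ∈ τ ∧ x ∉ C := fun x hx =>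
    ⟨(mem_union.1 (mem_sdiff.1 hx).1).resolve_left (mem_sdiff.1 hx).2, (mem_sdiff.1 hx).2⟩
  rw [union_union_distrib_left]
  refine hρ.union hτ subset_union_left (disjoint_left.2 fun x hx hx' => ?_) fun x hx y hy hxy => ?_
  · obtain ⟨hxτ, hxC⟩ := hτ' x hx
    exact disjoint_left.1 hτU hxτ (hρU ((mem_union.1 hx').resolve_left hxC))
  · obtain ⟨hxτ, hxC⟩ := hτ' x hx
    obtain ⟨hyρ, hyC⟩ := mem_sdiff.1 hy
    exact disjoint_left.1 hτU hxτ
      (hU y (hρU ((mem_union.1 hyρ).resolve_left hyC)) x hxy.symm hxC)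

theorem extensions_eq_sups (hX : Disjoint X C) (hUX : U ⊆ X) (hU : IsClosedOutside G C U) :
    extensions G k C X = extensions G k C U ⊻ extensions G k C (X \ U) := by
  ext ρ
  simp only [mem_sups, mem_extensions, sup_eq_union]
  constructor
  · rintro ⟨hρX, hρ⟩
    exact ⟨ρ ∩ U, ⟨inter_subset_right, hρ.union_inter_of_isClosedOutside (hX.mono_left hρX) hU⟩,
      ρ \ U, ⟨sdiff_subset_sdiff hρX le_rfl,
        hρ.union_sdiff_of_isClosedOutside (hX.mono_left hUX) hU⟩,
      by rw [union_comm, sdiff_union_inter]⟩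
  · rintro ⟨ρ, ⟨hρU, hρ⟩, τ, ⟨hτX, hτ⟩, rfl⟩
    exact ⟨union_subset (hρU.trans hUX) (hτX.trans sdiff_subset),
      hρ.union_union_of_isClosedOutside hτ hρU (sdiff_disjoint.mono_left hτX) hU⟩

theorem card_extensions_eq_mul (hX : Disjoint X C) (hUX : U ⊆ X) (hU : IsClosedOutside G C U) :
    #(extensions G k C X) = #(extensions G k C U) * #(extensions G k C (X \ U)) := by
  rw [extensions_eq_sups hX hUX hU]
  exact card_sups_of_subset_powerset extensions_subset_powerset extensions_subset_powerset
    disjoint_sdiff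

theorem avgCard_extensions_eq_add (hX : Disjoint X C) (hUX : U ⊆ X) (hU : IsClosedOutside G C U) :
    avgCard (extensions G k C X) =
      avgCard (extensions G k C U) + avgCard (extensions G k C (X \ U)) := by
  rw [extensions_eq_sups hX hUX hU]
  exact avgCard_sups_of_subset_powerset extensions_subset_powerset extensions_subset_powerset
    disjoint_sdiff ⟨∅, empty_mem_extensions⟩ ⟨∅, empty_mem_extensions⟩

end Extensions

section Components

open scoped FinsetFamily

variable [Fintype V] [DecidableEq V] {G : SimpleGraph V} {k : ℕ} {C : Finset V} {v v' : V}

noncomputable def outsideComp (G : SimpleGraph V) (C : Finset V) (v : V) : Finset V := by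
  classical exact univ.filter (ReachableIn G Cᶜ v)

theorem mem_outsideComp {x : V} : x ∈ outsideComp G C v ↔ ReachableIn G Cᶜ v x := by
  simp [outsideComp]

theorem mem_outsideComp_self (hv : v ∉ C) : v ∈ outsideComp G C v :=
  mem_outsideComp.2 (.refl (mem_compl.2 hv))

theorem disjoint_outsideComp : Disjoint (outsideComp G C v) C :=
  disjoint_left.2 fun _ hx => mem_compl.1 (mem_outsideComp.1 hx).right_mem

theorem isClosedOutside_outsideComp : IsClosedOutside G C (outsideComp G C v) :=
  fun _ hx _ hxy hyC => mem_outsideComp.2 <| (mem_outsideComp.1 hx).trans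
    (.of_adj (mem_outsideComp.1 hx).right_mem (mem_compl.2 hyC) hxy)

theorem disjoint_outsideComp_of_ne (huniv : GrowsFrom G k C univ) (hC : C.card = k)
    (hv : IsApex G C v) (hv' : IsApex G C v') (hne : v ≠ v') :
    Disjoint (outsideComp G C v) (outsideComp G C v') := by
  refine disjoint_left.2 fun x hx hx' => hne (huniv.eq_of_reachableIn hC hv hv' ?_)
  rw [← compl_eq_univ_sdiff]
  exact (mem_outsideComp.1 hx).trans (mem_outsideComp.1 hx').symm

theorem subKTrees_eq_sups (hC : G.IsNClique k C) :
    subKTrees G k C = {C} ⊻ extensions G k C Cᶜ := by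
  ext A
  simp only [mem_subKTrees_iff hC, mem_sups, mem_singleton, mem_extensions, sup_eq_union,
    exists_eq_left]
  constructor
  · intro h
    refine ⟨A \ C, ⟨fun x hx => mem_compl.2 (mem_sdiff.1 hx).2, ?_⟩, union_sdiff_of_subset h.subset⟩
    rwa [union_sdiff_of_subset h.subset]
  · rintro ⟨ρ, ⟨-, hρ⟩, rfl⟩
    exact hρ

theorem outsideComp_subset_compl_sdiff (huniv : GrowsFrom G k C univ) (hC : C.card = k)
    (hv : IsApex G C v) (hv' : IsApex G C v') (hne : v ≠ v') :
    outsideComp G C v' ⊆ Cᶜ \ outsideComp G C v :=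
  subset_sdiff.2 ⟨subset_compl_iff_disjoint_right.2 disjoint_outsideComp,
    (disjoint_outsideComp_of_ne huniv hC hv hv' hne).symm⟩

theorem kMean_eq_add_avgCard (hC : G.IsNClique k C) :
    kMean G k C = k + avgCard (extensions G k C Cᶜ) := by
  rw [kMean, ← avgCard, subKTrees_eq_sups hC,
    avgCard_sups_of_subset_powerset (singleton_subset_iff.2 (mem_powerset_self C))
      extensions_subset_powerset disjoint_compl_right (singleton_nonempty C)
      ⟨∅, empty_mem_extensions⟩, avgCard_singleton, hC.2]

theorem extensions_outsideComp_eq_insert (huniv : GrowsFrom G k C univ) (hC : C.card = k)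
    (hv : IsApex G C v) :
    extensions G k C (outsideComp G C v) =
      insert ∅ ((extensions G k C (outsideComp G C v)).filter (v ∈ ·)) := by
  ext ρ
  rw [mem_insert, mem_filter]
  obtain rfl | ⟨w, hw⟩ := ρ.eq_empty_or_nonempty
  · simp [empty_mem_extensions]
  refine ⟨fun hρ' => .inr ⟨hρ', ?_⟩, fun h => h.elim (fun h => h ▸ empty_mem_extensions) And.left⟩
  obtain ⟨hρU, hρ⟩ := mem_extensions.1 hρ'
  have hwC : w ∉ C := disjoint_left.1 disjoint_outsideComp (hρU hw)
  have := huniv.apex_mem hρ hC hv (mem_sdiff.2 ⟨mem_union_right C hw, hwC⟩)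
    (mem_outsideComp.1 (hρU hw))
  exact (mem_union.1 this).resolve_left hv.1

theorem card_extensions_outsideComp (huniv : GrowsFrom G k C univ) (hC : C.card = k)
    (hv : IsApex G C v) :
    #(extensions G k C (outsideComp G C v)) =
      #((extensions G k C (outsideComp G C v)).filter (v ∈ ·)) + 1 := by
  conv_lhs => rw [extensions_outsideComp_eq_insert huniv hC hv]
  exact card_insert_of_notMem fun h => notMem_empty v (mem_filter.1 h).2

end Components

section Swap

variable [Fintype V] [DecidableEq V] {G : SimpleGraph V} {k : ℕ} {C D A : Finset V} {u v z : V}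

theorem GrowsFrom.insert_apex (h : GrowsFrom G k D A) (huniv : GrowsFrom G k D univ)
    (hD : G.IsNClique k D) (hz : IsApex G D z) (hzA : z ∉ A) : GrowsFrom G k D (insert z A) :=
  h.grow hzA h.subset hD fun w hw => ⟨fun hzw => by
    by_contra hwD
    exact hzA (huniv.apex_mem h hD.2 hz (mem_sdiff.2 ⟨hw, hwD⟩)
      (.of_adj (mem_compl.2 hz.1) (mem_compl.2 hwD) hzw)), hz.2 w⟩

theorem filter_mem_subKTrees_swap (hu : u ∈ C) :
    (subKTrees G k (insert v (C.erase u))).filter (u ∈ ·) = (subKTrees G k C).filter (v ∈ ·) := by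
  ext A
  have hCA : C ⊆ A ↔ u ∈ A ∧ C.erase u ⊆ A := by
    rw [← insert_subset_iff, insert_erase hu]
  simp only [subKTrees, mem_filter, mem_univ, true_and, insert_subset_iff, hCA]
  tauto

theorem subset_union_outsideComp_of_notMem (hT : IsKTreeOn G k univ) (hC : G.IsNClique k C)
    (hv : IsApex G C v) (hu : u ∈ C) (hA : GrowsFrom G k (insert v (C.erase u)) A)
    (huA : u ∉ A) : A ⊆ insert v (C.erase u) ∪ outsideComp G C v := by
  set C₂ := insert v (C.erase u)
  have hC₂ : G.IsNClique k C₂ := isNClique_swap hC hv hu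
  intro w hw
  by_contra hw'
  obtain ⟨hwC₂, hwU⟩ := not_or.1 (mem_union.not.1 hw')
  have hwC : w ∉ C := fun h =>
    hwC₂ (mem_insert_of_mem (mem_erase.2 ⟨fun hwu => huA (hwu ▸ hw), h⟩))
  obtain ⟨z, hz, hzw⟩ := (hT.growsFrom (subset_univ C) hC).exists_apex_reachableIn hC.2
    (mem_sdiff.2 ⟨mem_univ w, hwC⟩)
  -- the walk from `z` to `w` avoids `v`, since `w` is not in the component of `v`
  have hzv : ¬ ReachableIn G (univ \ C) z v := fun hzv => hwU (mem_outsideComp.2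
    (by rw [compl_eq_univ_sdiff]; exact hzv.symm.trans hzw))
  have hmono : (univ \ C).erase v ⊆ C₂ᶜ := fun x hx => by
    obtain ⟨hxv, hx⟩ := mem_erase.1 hx
    simp only [C₂, mem_compl, mem_insert, mem_erase, hxv, false_or, not_and]
    exact fun _ => (mem_sdiff.1 hx).2
  have huz : G.Adj u z := (hz.2 u hu).symm
  exact huA ((hT.growsFrom (subset_univ C₂) hC₂).apex_mem hA hC₂.2 (isApex_swap hC hv hu)
    (mem_sdiff.2 ⟨hw, hwC₂⟩) (.cons (mem_compl.2 (isApex_swap hC hv hu).1) huz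
      ((hzw.erase hzv).mono hmono)))

theorem insert_eq_union_inter {α : Type*} [DecidableEq α] {C A U : Finset α} {u v : α}
    (hu : u ∈ C) (hvU : v ∈ U) (hUC : Disjoint U C) (hA : insert v (C.erase u) ⊆ A)
    (hAU : A ⊆ insert v (C.erase u) ∪ U) : insert u A = C ∪ A ∩ U := by
  ext x
  have h₁ := @hAU x
  have h₂ := @hA x
  have h₃ : x ∈ U → x ∉ C := fun h => disjoint_left.1 hUC h
  simp only [mem_insert, mem_union, mem_erase, mem_inter] at h₁ h₂ ⊢
  constructor
  · rintro (rfl | hx)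
    · exact .inl hu
    · rcases h₁ hx with (rfl | ⟨-, h⟩) | h
      exacts [.inr ⟨hx, hvU⟩, .inl h, .inr ⟨hx, h⟩]
  · rintro (hx | ⟨hx, -⟩)
    · by_cases hxu : x = u
      exacts [.inl hxu, .inr (h₂ (.inr ⟨hxu, hx⟩))]
    · exact .inr hx

/-- The injection is `A ↦ A ∩ outsideComp G C v`. -/
theorem card_filter_notMem_subKTrees_swap_le (hT : IsKTreeOn G k univ) (hC : G.IsNClique k C)
    (hv : IsApex G C v) (hu : u ∈ C) :
    #((subKTrees G k (insert v (C.erase u))).filter (u ∉ ·)) ≤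
      #((extensions G k C (outsideComp G C v)).filter (v ∈ ·)) := by
  set C₂ := insert v (C.erase u)
  set U := outsideComp G C v
  have hC₂ : G.IsNClique k C₂ := isNClique_swap hC hv hu
  have hvU : v ∈ U := mem_outsideComp_self hv.1
  have hUC : Disjoint U C := disjoint_outsideComp
  have key : ∀ A ∈ (subKTrees G k C₂).filter (u ∉ ·),
      insert u A = C ∪ A ∩ U ∧ A ∩ U ∈ (extensions G k C U).filter (v ∈ ·) := by
    intro A hA
    obtain ⟨hA, huA⟩ := mem_filter.1 hA
    rw [mem_subKTrees_iff hC₂] at hA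
    have hAsub := subset_union_outsideComp_of_notMem hT hC hv hu hA huA
    have hC₂A := hA.subset
    have heq := insert_eq_union_inter hu hvU hUC hC₂A hAsub
    have hgrow := ((hA.insert_apex (hT.growsFrom (subset_univ C₂) hC₂) hC₂
      (isApex_swap hC hv hu) huA).isKTreeOn hC₂).growsFrom (heq ▸ subset_union_left) hC
    refine ⟨heq, mem_filter.2 ⟨mem_extensions.2 ⟨inter_subset_right, heq ▸ hgrow⟩,
      mem_inter.2 ⟨hC₂A (mem_insert_self v _), hvU⟩⟩⟩
  refine card_le_card_of_injOn (· ∩ U) (fun A hA => (key A hA).2) fun A hA A' hA' hAA' => ?_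
  have huA := (mem_filter.1 hA).2
  have huA' := (mem_filter.1 hA').2
  rw [← erase_insert huA, ← erase_insert huA', (key A hA).1, (key A' hA').1]
  simp only at hAA'
  rw [hAA']

end Swap

section Arithmetic

theorem add_mul_add_lt_mul_sub {r f₂ f₃ a₂ a₃ : ℝ} (hr : 0 ≤ r) (hf₂ : r + 1 ≤ f₂)
    (hf₃ : r + 1 ≤ f₃) (ha₂ : 2 * a₂ ≤ f₂ - 1) (ha₃ : 2 * a₃ ≤ f₃ - 1) :
    (r + 1) * (a₂ + a₃) < f₂ * f₃ - r := by
  have h₁ : (r + 1) * (2 * (a₂ + a₃)) ≤ (r + 1) * (f₂ + f₃ - 2) := by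
    apply mul_le_mul_of_nonneg_left _ (by linarith); linarith
  nlinarith [mul_nonneg (sub_nonneg.2 hf₂) (sub_nonneg.2 hf₃)]

/-- The left side is `μ(T; C) = k + a₁ + a` with `a₁ = b·r/(r+1)`, the right side is
`μ(T; C₂)`: its `r·N` sub-`k`-trees through `C ∪ {v}` have mean `k + b + a`, larger by `b/(r+1)`,
which outweighs the at most `r` others, of order `≥ k`. -/
theorem mean_lt_of_bounds {k r N b a n S : ℝ} (hr : 0 < r) (hb : 1 ≤ b) (ha : 0 ≤ a)
    (hN : (r + 1) * a < N - r) (hn : 0 ≤ n) (hnr : n ≤ r) (hS : k * n ≤ S) :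
    k + b * (r / (r + 1)) + a < ((k + (b + a)) * (r * N) + S) / (r * N + n) := by
  have hNr : r < N := by nlinarith
  have hN0 : 0 < N := hr.trans hNr
  have hgain : (b * (r / (r + 1)) + a) * (N + 1) < (b + a) * N := by
    have : a * (r + 1) < b * (N - r) := by nlinarith
    have hr1 : (0 : ℝ) < r + 1 := by linarith
    rw [show b * (r / (r + 1)) + a = (b * r + a * (r + 1)) / (r + 1) by field_simp,
      div_mul_eq_mul_div, div_lt_iff₀ hr1]
    linarith
  have hm : 0 ≤ b * (r / (r + 1)) + a := by positivity
  rw [lt_div_iff₀ (by positivity)]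
  nlinarith [mul_le_mul_of_nonneg_left hnr hm]

end Arithmetic

section MajorClique

open scoped FinsetFamily

variable [Fintype V] [DecidableEq V] {G : SimpleGraph V} {k : ℕ} {C : Finset V} {u v : V}

theorem filter_mem_subKTrees_eq_sups (hC : G.IsNClique k C) (hv : IsApex G C v) :
    (subKTrees G k C).filter (v ∈ ·) = {C} ⊻
      ((extensions G k C (outsideComp G C v)).filter (v ∈ ·) ⊻
        extensions G k C (Cᶜ \ outsideComp G C v)) := by
  have hvU := mem_outsideComp_self (G := G) hv.1
  rw [subKTrees_eq_sups hC, extensions_eq_sups disjoint_compl_left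
      (subset_compl_iff_disjoint_right.2 disjoint_outsideComp) isClosedOutside_outsideComp,
    sups_comm, filter_mem_sups (by simpa using hv.1),
    filter_mem_sups fun τ hτ hvτ => (mem_sdiff.1 (mem_powerset.1
      (extensions_subset_powerset hτ) hvτ)).2 hvU, sups_comm]

theorem cliqueDeg_eq_card_apexes [DecidablePred (IsApex G C)] (hC : G.IsNClique k C) :
    cliqueDeg G k C = #(univ.filter (IsApex G C)) := by
  calc cliqueDeg G k C = #((univ.filter (IsApex G C)).image (insert · C)) := by
        unfold cliqueDeg
        congr 1
        ext Q
        simp only [mem_filter, mem_univ, true_and, mem_image]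
        constructor
        · rintro ⟨hCQ, hQ⟩
          obtain ⟨z, hz, rfl⟩ := exists_eq_insert_iff.2 ⟨hCQ, by rw [hC.2, hQ.2]⟩
          exact ⟨z, ⟨hz, fun c hc => hQ.1 (mem_insert_self z C) (mem_insert_of_mem hc)
            fun h => hz (h ▸ hc)⟩, rfl⟩
        · rintro ⟨z, hz, rfl⟩
          exact ⟨subset_insert z C, hC.insert hz.2⟩
    _ = _ := card_image_of_injOn fun z hz z' _ h => by
        have : z ∈ insert z' C := h ▸ mem_insert_self z C
        exact (mem_insert.1 this).resolve_right (mem_filter.1 hz).2.1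

theorem singleton_mem_filter_extensions (hC : G.IsNClique k C) (hv : IsApex G C v) :
    {v} ∈ (extensions G k C (outsideComp G C v)).filter (v ∈ ·) := by
  refine mem_filter.2 ⟨mem_extensions.2 ⟨singleton_subset_iff.2 (mem_outsideComp_self hv.1), ?_⟩,
    mem_singleton_self v⟩
  rw [union_comm, ← insert_eq]
  exact (hC.insert hv.2).growsFrom (subset_insert v C) hC.2

theorem kMean_eq_of_isApex (hT : IsKTreeOn G k univ) (hC : G.IsNClique k C) (hv : IsApex G C v) :
    let R := (extensions G k C (outsideComp G C v)).filter (v ∈ ·)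
    kMean G k C = k + avgCard R * (#R / (#R + 1)) +
      avgCard (extensions G k C (Cᶜ \ outsideComp G C v)) := by
  intro R
  rw [kMean_eq_add_avgCard hC, avgCard_extensions_eq_add disjoint_compl_left
    (subset_compl_iff_disjoint_right.2 disjoint_outsideComp) isClosedOutside_outsideComp,
    extensions_outsideComp_eq_insert (hT.growsFrom (subset_univ C) hC) hC.2 hv,
    avgCard_insert_empty fun h => notMem_empty v (mem_filter.1 h).2, add_assoc]

/-- The sub-`k`-trees containing `C - u + v` split into those containing `u`, which are the
sub-`k`-trees containing `C ∪ {v}`, and the family `B` of the others. -/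
theorem kMean_swap_eq (hC : G.IsNClique k C) (hv : IsApex G C v) (hu : u ∈ C) :
    let R := (extensions G k C (outsideComp G C v)).filter (v ∈ ·)
    let F := extensions G k C (Cᶜ \ outsideComp G C v)
    let B := (subKTrees G k (insert v (C.erase u))).filter (u ∉ ·)
    kMean G k (insert v (C.erase u)) =
      ((k + (avgCard R + avgCard F)) * (#R * #F) + avgCard B * #B) / (#R * #F + #B) := by
  intro R F B
  have hR : R ⊆ (outsideComp G C v).powerset := (filter_subset _ _).trans extensions_subset_powerset
  have hRF := sups_subset_powerset_union hR (extensions_subset_powerset (C := C) (G := G) (k := k)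
    (U := Cᶜ \ outsideComp G C v))
  have hC' : {C} ⊆ C.powerset := singleton_subset_iff.2 (mem_powerset_self C)
  have hdisj : Disjoint C (outsideComp G C v ∪ Cᶜ \ outsideComp G C v) :=
    disjoint_compl_right.mono_right (union_subset
      (subset_compl_iff_disjoint_right.2 disjoint_outsideComp) sdiff_subset)
  have hRne : R.Nonempty := ⟨_, singleton_mem_filter_extensions hC hv⟩
  rw [kMean, ← avgCard, ← filter_union_filter_not_eq (u ∈ ·) (subKTrees G k _),
    avgCard_union (disjoint_filter_filter_not _ _ _), filter_mem_subKTrees_swap hu,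
    filter_mem_subKTrees_eq_sups hC hv,
    avgCard_sups_of_subset_powerset hC' hRF hdisj (singleton_nonempty C)
      (hRne.sups ⟨∅, empty_mem_extensions⟩), card_sups_of_subset_powerset hC' hRF hdisj,
    avgCard_sups_of_subset_powerset hR extensions_subset_powerset disjoint_sdiff hRne
      ⟨∅, empty_mem_extensions⟩, card_sups_of_subset_powerset hR extensions_subset_powerset
      disjoint_sdiff, avgCard_singleton, hC.2, card_singleton, one_mul]
  push_cast
  ring

theorem exists_cliqueAdj_kMean_lt (hk : 1 ≤ k) (hT : IsKTreeOn G k univ)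
    (hC : G.IsNClique k C) {v₁ v₂ v₃ : V} (hv₁ : IsApex G C v₁) (hv₂ : IsApex G C v₂)
    (hv₃ : IsApex G C v₃) (h₁₂ : v₁ ≠ v₂) (h₁₃ : v₁ ≠ v₃) (h₂₃ : v₂ ≠ v₃)
    (hmin₂ : #(extensions G k C (outsideComp G C v₁)) ≤ #(extensions G k C (outsideComp G C v₂)))
    (hmin₃ : #(extensions G k C (outsideComp G C v₁)) ≤ #(extensions G k C (outsideComp G C v₃))) :
    ∃ C₂ : Finset V, G.IsNClique k C₂ ∧ CliqueAdj G k C C₂ ∧ kMean G k C < kMean G k C₂ := by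
  have huniv := hT.growsFrom (subset_univ C) hC
  obtain ⟨u, hu⟩ : C.Nonempty := card_pos.1 (by rw [hC.2]; exact hk)
  set U₁ := outsideComp G C v₁
  set U₂ := outsideComp G C v₂
  set R := (extensions G k C U₁).filter (v₁ ∈ ·)
  set F₂ := extensions G k C U₂
  set F₃ := extensions G k C ((Cᶜ \ U₁) \ U₂)
  set B := (subKTrees G k (insert v₁ (C.erase u))).filter (u ∉ ·)
  have hF : Disjoint (Cᶜ \ U₁) C := disjoint_compl_left.mono_left sdiff_subset
  have hU₂ := outsideComp_subset_compl_sdiff huniv hC.2 hv₁ hv₂ h₁₂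
  have hU₃ : outsideComp G C v₃ ⊆ (Cᶜ \ U₁) \ U₂ := subset_sdiff.2
    ⟨outsideComp_subset_compl_sdiff huniv hC.2 hv₁ hv₃ h₁₃,
      (disjoint_outsideComp_of_ne huniv hC.2 hv₂ hv₃ h₂₃).symm⟩
  have hμ := kMean_eq_of_isApex hT hC hv₁
  have hμ₂ := kMean_swap_eq hC hv₁ hu
  dsimp only at hμ hμ₂
  rw [avgCard_extensions_eq_add hF hU₂ isClosedOutside_outsideComp] at hμ hμ₂
  rw [card_extensions_eq_mul hF hU₂ isClosedOutside_outsideComp, Nat.cast_mul] at hμ₂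
  have hf₁ := card_extensions_outsideComp huniv hC.2 hv₁
  have hR : R.Nonempty := ⟨_, singleton_mem_filter_extensions hC hv₁⟩
  have hf₂ : (#R : ℝ) + 1 ≤ #F₂ := by exact_mod_cast hf₁ ▸ hmin₂
  have hf₃ : (#R : ℝ) + 1 ≤ #F₃ := by
    exact_mod_cast hf₁ ▸ hmin₃.trans (card_le_card (extensions_mono hU₃))
  have ha₂ : 2 * avgCard F₂ ≤ #F₂ - 1 := (isAccessible_extensions disjoint_outsideComp
    ).two_mul_avgCard_le ⟨∅, empty_mem_extensions⟩
  have ha₃ : 2 * avgCard F₃ ≤ #F₃ - 1 := (isAccessible_extensions (hF.mono_left sdiff_subset)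
    ).two_mul_avgCard_le ⟨∅, empty_mem_extensions⟩
  have hB : (#B : ℝ) ≤ #R := by exact_mod_cast card_filter_notMem_subKTrees_swap_le hT hC hv₁ hu
  have hSB : (k : ℝ) * #B ≤ avgCard B * #B := mul_card_le_avgCard_mul_card fun A hA =>
    (isNClique_swap hC hv₁ hu).2 ▸ card_le_card
      ((mem_subKTrees_iff (isNClique_swap hC hv₁ hu)).1 (mem_filter.1 hA).1).subset
  refine ⟨_, isNClique_swap hC hv₁ hu, cliqueAdj_swap hC hv₁, ?_⟩
  rw [hμ, hμ₂]
  exact mean_lt_of_bounds (by exact_mod_cast hR.card_pos) (one_le_avgCard_filter_mem hR)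
    (add_nonneg (avgCard_nonneg _) (avgCard_nonneg _))
    (add_mul_add_lt_mul_sub (Nat.cast_nonneg _) hf₂ hf₃ ha₂ ha₃) (Nat.cast_nonneg _) hB hSB

end MajorClique

/-- For any major `k`-clique `C₁` of a `k`-tree `T` (a `k`-clique
contained in at least `3` distinct `(k+1)`-cliques), there is a `k`-clique `C₂` adjacent
to `C₁` with `μ(T; C₂) > μ(T; C₁)`. -/
theorem major_clique_not_max {V : Type*} [Fintype V] [DecidableEq V]
    (k : ℕ) (hk : 1 ≤ k) (G : SimpleGraph V) (hG : IsKTree G k)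
    (C₁ : Finset V) (hC₁ : G.IsNClique k C₁) (hmaj : 3 ≤ cliqueDeg G k C₁) :
    ∃ C₂ : Finset V, G.IsNClique k C₂ ∧ CliqueAdj G k C₁ C₂ ∧
      kMean G k C₁ < kMean G k C₂ := by
  classical
  set apexes := univ.filter (IsApex G C₁)
  have hcard : 3 ≤ #apexes := cliqueDeg_eq_card_apexes hC₁ ▸ hmaj
  obtain ⟨v₁, hv₁, hmin⟩ := exists_min_image apexes
    (fun v => #(extensions G k C₁ (outsideComp G C₁ v))) (card_pos.1 (by omega))
  obtain ⟨v₂, hv₂, v₃, hv₃, h₂₃⟩ := one_lt_card.1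
    (by rw [card_erase_of_mem hv₁]; omega : 1 < #(apexes.erase v₁))
  obtain ⟨h₂₁, hv₂⟩ := mem_erase.1 hv₂
  obtain ⟨h₃₁, hv₃⟩ := mem_erase.1 hv₃
  exact exists_cliqueAdj_kMean_lt hk hG hC₁ (mem_filter.1 hv₁).2 (mem_filter.1 hv₂).2
    (mem_filter.1 hv₃).2 (Ne.symm h₂₁) (Ne.symm h₃₁) h₂₃ (hmin v₂ hv₂) (hmin v₃ hv₃)
end

section
/- A k-tree T that is neither K_k nor K_{k+1} is a path-type k-tree if and only if T has exactly two k-leaves (vertices of degree k). -/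
open Finset

variable {V : Type*}

section KTAux

open scoped Classical

variable {V : Type*} [DecidableEq V]

/-- The degree of `w` inside the vertex set `s`. -/
noncomputable def KTdeg (G : SimpleGraph V) (s : Finset V) (w : V) : ℕ :=
  (s.filter fun x => G.Adj w x).card

/-- The set of `k`-leaves of the induced graph on `s`. -/
noncomputable def KTleafSet (G : SimpleGraph V) (k : ℕ) (s : Finset V) : Finset V :=
  s.filter fun w => KTdeg G s w = k

variable {G : SimpleGraph V} {k : ℕ} {s C : Finset V} {v w : V}

lemma KTdeg_eq_ncard (G : SimpleGraph V) (s : Finset V) (w : V) :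
    (G.neighborSet w ∩ (↑s : Set V)).ncard = KTdeg G s w := by
  have h : G.neighborSet w ∩ (↑s : Set V) = ↑(s.filter fun x => G.Adj w x) := by
    ext x
    simp [SimpleGraph.mem_neighborSet, and_comm]
  rw [h, Set.ncard_coe_finset]
  rfl

lemma mem_KTleafSet : w ∈ KTleafSet G k s ↔ w ∈ s ∧ KTdeg G s w = k := by
  simp [KTleafSet]

lemma KT_filter_adj_eq (hC : C ⊆ s) (hadj : ∀ w ∈ s, G.Adj v w ↔ w ∈ C) :
    (s.filter fun x => G.Adj v x) = C := by
  ext x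
  simp only [Finset.mem_filter]
  constructor
  · rintro ⟨hx, ha⟩; exact (hadj x hx).1 ha
  · intro hx; exact ⟨hC hx, (hadj x (hC hx)).2 hx⟩

lemma KTdeg_insert_self (hv : v ∉ s) (hC : C ⊆ s) (hadj : ∀ w ∈ s, G.Adj v w ↔ w ∈ C) :
    KTdeg G (insert v s) v = C.card := by
  unfold KTdeg
  rw [Finset.filter_insert, if_neg (G.irrefl), KT_filter_adj_eq hC hadj]

lemma KTdeg_insert_of_mem (hv : v ∉ s) (hadj : ∀ w ∈ s, G.Adj v w ↔ w ∈ C)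
    (hw : w ∈ s) :
    KTdeg G (insert v s) w = KTdeg G s w + if w ∈ C then 1 else 0 := by
  unfold KTdeg
  have hwv : G.Adj w v ↔ w ∈ C :=
    ⟨fun h => (hadj w hw).1 h.symm, fun h => ((hadj w hw).2 h).symm⟩
  rw [Finset.filter_insert]
  by_cases hwC : w ∈ C
  · rw [if_pos (hwv.2 hwC), if_pos hwC,
      Finset.card_insert_of_notMem (fun h => hv (Finset.mem_filter.1 h).1)]
  · rw [if_neg (fun h => hwC (hwv.1 h)), if_neg hwC]
    omega

lemma KTcard_ge (h : IsKTreeOn G k s) : k ≤ s.card := by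
  induction h with
  | base s hs => exact hs.card_eq.ge
  | grow s v C h hv hC hCk hadj IH =>
      rw [Finset.card_insert_of_notMem hv]; omega

lemma KTclique_of_card (h : IsKTreeOn G k s) (hc : s.card = k) : G.IsNClique k s := by
  cases h with
  | base s hs => exact hs
  | grow s v C h hv hC hCk hadj =>
      have := KTcard_ge h
      rw [Finset.card_insert_of_notMem hv] at hc
      omega

lemma KTclique_of_card_succ (h : IsKTreeOn G k s) (hc : s.card = k + 1) :
    G.IsNClique (k + 1) s := by
  cases h with
  | base s hs => rw [hs.card_eq] at hc; omega
  | grow s v C h hv hC hCk hadj =>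
      rw [Finset.card_insert_of_notMem hv] at hc
      have hs : s.card = k := by omega
      have hclique := KTclique_of_card h hs
      have hCs : C = s := Finset.eq_of_subset_of_card_le hC (by rw [hs, hCk.card_eq])
      exact hclique.insert fun b hb => (hadj b hb).2 (hCs ▸ hb)

lemma KTdeg_clique {n : ℕ} (hs : G.IsNClique n s) (hw : w ∈ s) :
    KTdeg G s w = s.card - 1 := by
  unfold KTdeg
  have h : (s.filter fun x => G.Adj w x) = s.erase w := by
    ext x
    simp only [Finset.mem_filter, Finset.mem_erase]
    constructor
    · rintro ⟨hx, ha⟩; exact ⟨ha.ne', hx⟩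
    · rintro ⟨hne, hx⟩; exact ⟨hx, hs.1 hw hx (Ne.symm hne)⟩
  rw [h, Finset.card_erase_of_mem hw]

lemma KTminDeg (h : IsKTreeOn G k s) :
    k + 1 ≤ s.card → ∀ w ∈ s, k ≤ KTdeg G s w := by
  induction h with
  | base s hs =>
      intro hcard w hw
      rw [hs.card_eq] at hcard; omega
  | grow s v C h hv hC hCk hadj IH =>
      intro hcard w hw
      rcases Finset.mem_insert.1 hw with rfl | hw'
      · rw [KTdeg_insert_self hv hC hadj, hCk.card_eq]
      · rcases eq_or_lt_of_le (KTcard_ge h) with heq | hlt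
        · have hclique := KTclique_of_card h heq.symm
          have hCs : C = s := Finset.eq_of_subset_of_card_le hC
            (by rw [← heq, hCk.card_eq])
          rw [KTdeg_insert_of_mem hv hadj hw', if_pos (hCs ▸ hw' : w ∈ C),
            KTdeg_clique hclique hw']
          omega
        · have := IH hlt w hw'
          rw [KTdeg_insert_of_mem hv hadj hw']
          by_cases hwC : w ∈ C <;> simp [hwC] <;> omega

lemma KTerase (h : IsKTreeOn G k s) :
    ∀ ℓ ∈ s, k + 1 ≤ s.card → KTdeg G s ℓ = k → IsKTreeOn G k (s.erase ℓ) := by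
  induction h with
  | base s hs =>
      intro ℓ hl hcard _
      rw [hs.card_eq] at hcard; omega
  | grow s v C h hv hC hCk hadj IH =>
      intro ℓ hl hcard hdeg
      rcases Finset.mem_insert.1 hl with rfl | hls
      · rw [Finset.erase_insert hv]; exact h
      · have hlv : ℓ ≠ v := fun h' => hv (h' ▸ hls)
        rcases eq_or_lt_of_le (KTcard_ge h) with heq | hlt
        · have hcl : G.IsNClique (k + 1) (insert v s) :=
            KTclique_of_card_succ (IsKTreeOn.grow s v C h hv hC hCk hadj)
              (by rw [Finset.card_insert_of_notMem hv, ← heq])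
          exact IsKTreeOn.base _ ⟨hcl.1.subset (by exact_mod_cast Finset.erase_subset _ _),
            by rw [Finset.card_erase_of_mem hl, hcl.card_eq]; omega⟩
        · have hlC : ℓ ∉ C := by
            intro hlC
            have h1 : k ≤ KTdeg G s ℓ := KTminDeg h hlt ℓ hls
            rw [KTdeg_insert_of_mem hv hadj hls, if_pos hlC] at hdeg
            omega
          have hdeg' : KTdeg G s ℓ = k := by
            rw [KTdeg_insert_of_mem hv hadj hls, if_neg hlC] at hdeg
            omega
          have h' := IH ℓ hls hlt hdeg'
          have heq2 : (insert v s).erase ℓ = insert v (s.erase ℓ) :=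
            Finset.erase_insert_of_ne (Ne.symm hlv)
          rw [heq2]
          refine IsKTreeOn.grow _ v C h' (fun hmem => hv (Finset.erase_subset _ _ hmem))
            (fun x hx => Finset.mem_erase.2 ⟨fun hxl => hlC (hxl ▸ hx), hC hx⟩) hCk
            (fun w hw => hadj w (Finset.mem_of_mem_erase hw))

lemma KTnot_adj_leaves {l1 l2 : V} (hk : 1 ≤ k) (h : IsKTreeOn G k s)
    (hcard : k + 2 ≤ s.card) (h1 : l1 ∈ s) (h2 : l2 ∈ s)
    (d1 : KTdeg G s l1 = k) (d2 : KTdeg G s l2 = k) (hA : G.Adj l1 l2) : False := by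
  have h' := KTerase h l1 h1 (by omega) d1
  have hcard' : k + 1 ≤ (s.erase l1).card := by
    rw [Finset.card_erase_of_mem h1]; omega
  have h2' : l2 ∈ s.erase l1 := Finset.mem_erase.2 ⟨hA.ne', h2⟩
  have hmin := KTminDeg h' hcard' l2 h2'
  have hdeg : KTdeg G (s.erase l1) l2 = k - 1 := by
    unfold KTdeg at d2 ⊢
    rw [Finset.filter_erase,
      Finset.card_erase_of_mem (Finset.mem_filter.2 ⟨h1, hA.symm⟩), d2]
  omega

lemma KTleafSet_insert (h : IsKTreeOn G k s) (hcard : k + 1 ≤ s.card) (hv : v ∉ s)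
    (hC : C ⊆ s) (hCk : C.card = k) (hadj : ∀ w ∈ s, G.Adj v w ↔ w ∈ C) :
    KTleafSet G k (insert v s) = insert v (KTleafSet G k s \ C) := by
  ext x
  simp only [KTleafSet, Finset.mem_filter, Finset.mem_insert, Finset.mem_sdiff]
  constructor
  · rintro ⟨hx | hx, hdeg⟩
    · exact Or.inl hx
    · right
      have hxC : x ∉ C := by
        intro hxC
        have := KTminDeg h hcard x hx
        rw [KTdeg_insert_of_mem hv hadj hx, if_pos hxC] at hdeg
        omega
      rw [KTdeg_insert_of_mem hv hadj hx, if_neg hxC] at hdeg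
      exact ⟨⟨hx, by omega⟩, hxC⟩
  · rintro (rfl | ⟨⟨hx, hdeg⟩, hxC⟩)
    · exact ⟨Or.inl rfl, by rw [KTdeg_insert_self hv hC hadj, hCk]⟩
    · exact ⟨Or.inr hx, by rw [KTdeg_insert_of_mem hv hadj hx, if_neg hxC]; omega⟩

lemma KTleafSet_clique (hs : G.IsNClique (k + 1) s) : KTleafSet G k s = s := by
  apply Finset.filter_true_of_mem
  intro x hx
  rw [KTdeg_clique hs hx, hs.card_eq]
  omega

lemma KTleafSet_subset : KTleafSet G k s ⊆ s := Finset.filter_subset _ _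

lemma KTtwo_leaves (hk : 1 ≤ k) (h : IsKTreeOn G k s) :
    k + 2 ≤ s.card → 2 ≤ (KTleafSet G k s).card := by
  induction h with
  | base s hs =>
      intro hcard; rw [hs.card_eq] at hcard; omega
  | grow s v C h hv hC hCk hadj IH =>
      intro hcard
      rw [Finset.card_insert_of_notMem hv] at hcard
      have hs1 : k + 1 ≤ s.card := by omega
      rw [KTleafSet_insert h hs1 hv hC hCk.card_eq hadj,
        Finset.card_insert_of_notMem
          (fun hx => hv (KTleafSet_subset (Finset.mem_sdiff.1 hx).1))]
      suffices hne : (KTleafSet G k s \ C).Nonempty by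
        have := Finset.card_pos.2 hne; omega
      rcases eq_or_lt_of_le hs1 with heq | hlt
      · have hcl := KTclique_of_card_succ h heq.symm
        rw [KTleafSet_clique hcl]
        rw [← Finset.card_pos, Finset.card_sdiff_of_subset hC, hCk.card_eq, ← heq]
        omega
      · have h2 := IH (by omega)
        obtain ⟨a, ha, b, hb, hab⟩ :=
          Finset.one_lt_card.1 (show 1 < (KTleafSet G k s).card by omega)
        by_cases haC : a ∈ C
        · by_cases hbC : b ∈ C
          · exact absurd (hCk.1 haC hbC hab) fun hA =>
              KTnot_adj_leaves hk h (by omega) (KTleafSet_subset ha)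
                (KTleafSet_subset hb) (mem_KTleafSet.1 ha).2 (mem_KTleafSet.1 hb).2 hA
          · exact ⟨b, Finset.mem_sdiff.2 ⟨hb, hbC⟩⟩
        · exact ⟨a, Finset.mem_sdiff.2 ⟨ha, haC⟩⟩

lemma KTclique_ktree (hs : G.IsNClique (k + 1) s) : IsKTreeOn G k s := by
  have hne : s.Nonempty := Finset.card_pos.1 (by rw [hs.card_eq]; omega)
  obtain ⟨v, hv⟩ := hne
  have herase : G.IsNClique k (s.erase v) :=
    ⟨hs.1.subset (by exact_mod_cast Finset.erase_subset _ _),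
      by rw [Finset.card_erase_of_mem hv, hs.card_eq]; omega⟩
  have h := IsKTreeOn.grow (s.erase v) v (s.erase v) (IsKTreeOn.base _ herase)
    (Finset.notMem_erase _ _) Finset.Subset.rfl herase
    (fun w hw => ⟨fun _ => hw, fun _ =>
      hs.1 hv (Finset.mem_of_mem_erase hw) (Ne.symm (Finset.mem_erase.1 hw).1)⟩)
  rwa [Finset.insert_erase hv] at h

lemma KTpathtype_ktree (h : IsPathTypeOn G k s) : IsKTreeOn G k s := by
  induction h with
  | base₁ s hs => exact IsKTreeOn.base s hs
  | base₂ s hs => exact KTclique_ktree hs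
  | grow s v C hp hcard hv hC hCk hsimp hadj IH =>
      exact IsKTreeOn.grow s v C IH hv hC hCk hadj

lemma KTpathtype_two_leaves (hk : 1 ≤ k) (h : IsPathTypeOn G k s) :
    k + 2 ≤ s.card → (KTleafSet G k s).card = 2 := by
  induction h with
  | base₁ s hs => intro hc; rw [hs.card_eq] at hc; omega
  | base₂ s hs => intro hc; rw [hs.card_eq] at hc; omega
  | grow s v C hp hcard hv hC hCk hsimp hadj IH =>
      intro _
      have hkt := KTpathtype_ktree hp
      obtain ⟨l, hlC, hldeg⟩ := hsimp
      rw [KTdeg_eq_ncard] at hldeg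
      rw [KTleafSet_insert hkt hcard hv hC hCk.card_eq hadj,
        Finset.card_insert_of_notMem
          (fun hx => hv (KTleafSet_subset (Finset.mem_sdiff.1 hx).1))]
      suffices h1 : (KTleafSet G k s \ C).card = 1 by omega
      rcases eq_or_lt_of_le hcard with heq | hlt
      · have hcl := KTclique_of_card_succ hkt heq.symm
        rw [KTleafSet_clique hcl, Finset.card_sdiff_of_subset hC, hCk.card_eq, ← heq]
        omega
      · have h2 := IH (by omega)
        have hlleaf : l ∈ KTleafSet G k s := mem_KTleafSet.2 ⟨hC hlC, hldeg⟩
        apply le_antisymm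
        · have hsub : KTleafSet G k s \ C ⊆ (KTleafSet G k s).erase l := fun x hx =>
            Finset.mem_erase.2 ⟨fun he => (Finset.mem_sdiff.1 hx).2 (he ▸ hlC),
              (Finset.mem_sdiff.1 hx).1⟩
          calc (KTleafSet G k s \ C).card ≤ ((KTleafSet G k s).erase l).card :=
                Finset.card_le_card hsub
            _ = 1 := by rw [Finset.card_erase_of_mem hlleaf, h2]
        · obtain ⟨l', hl', hne⟩ :=
            Finset.exists_mem_ne (by omega : 1 < (KTleafSet G k s).card) l
          have hl'C : l' ∉ C := fun hc =>
            KTnot_adj_leaves hk hkt hlt (KTleafSet_subset hl') (KTleafSet_subset hlleaf)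
              (mem_KTleafSet.1 hl').2 (mem_KTleafSet.1 hlleaf).2 (hCk.1 hc hlC hne)
          exact Finset.card_pos.2 ⟨l', Finset.mem_sdiff.2 ⟨hl', hl'C⟩⟩

lemma KTktree_pathtype (hk : 1 ≤ k) (h : IsKTreeOn G k s) :
    k + 2 ≤ s.card → (KTleafSet G k s).card = 2 → IsPathTypeOn G k s := by
  induction h with
  | base s hs => intro hc _; rw [hs.card_eq] at hc; omega
  | grow s v C h hv hC hCk hadj IH =>
      intro hcard hleaf
      rw [Finset.card_insert_of_notMem hv] at hcard
      have hs1 : k + 1 ≤ s.card := by omega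
      rcases eq_or_lt_of_le hs1 with heq | hlt
      · have hcl := KTclique_of_card_succ h heq.symm
        have hCne : C.Nonempty := Finset.card_pos.1 (by rw [hCk.card_eq]; omega)
        obtain ⟨l, hl⟩ := hCne
        exact IsPathTypeOn.grow s v C (IsPathTypeOn.base₂ s hcl) hs1 hv hC hCk
          ⟨l, hl, by rw [KTdeg_eq_ncard, KTdeg_clique hcl (hC hl), ← heq]; omega⟩ hadj
      · rw [KTleafSet_insert h hs1 hv hC hCk.card_eq hadj,
          Finset.card_insert_of_notMem
            (fun hx => hv (KTleafSet_subset (Finset.mem_sdiff.1 hx).1))] at hleaf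
        have hsplit := Finset.card_sdiff_add_card_inter (KTleafSet G k s) C
        have h2L := KTtwo_leaves hk h (by omega)
        have hIle : (KTleafSet G k s ∩ C).card ≤ 1 := by
          by_contra hgt
          obtain ⟨a, ha, b, hb, hab⟩ :=
            Finset.one_lt_card.1 (show 1 < (KTleafSet G k s ∩ C).card by omega)
          have haL := (Finset.mem_inter.1 ha).1
          have hbL := (Finset.mem_inter.1 hb).1
          exact KTnot_adj_leaves hk h (by omega) (KTleafSet_subset haL)
            (KTleafSet_subset hbL) (mem_KTleafSet.1 haL).2 (mem_KTleafSet.1 hbL).2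
            (hCk.1 (Finset.mem_inter.1 ha).2 (Finset.mem_inter.1 hb).2 hab)
        have hL2 : (KTleafSet G k s).card = 2 := by omega
        obtain ⟨l, hl⟩ := Finset.card_pos.1
          (by omega : 0 < (KTleafSet G k s ∩ C).card)
        have hlC := (Finset.mem_inter.1 hl).2
        have hlleaf := mem_KTleafSet.1 (Finset.mem_inter.1 hl).1
        exact IsPathTypeOn.grow s v C (IH (by omega) hL2) hs1 hv hC hCk
          ⟨l, hlC, by rw [KTdeg_eq_ncard]; exact hlleaf.2⟩ hadj

end KTAux

/-- A `k`-tree `T` that is neither `K_k` nor `K_{k+1}` is a path-type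
`k`-tree if and only if it has exactly two `k`-leaves (vertices of degree `k`). -/
theorem pathType_iff_two_kLeaves {V : Type*} [Fintype V] [DecidableEq V]
    (k : ℕ) (hk : 1 ≤ k) (G : SimpleGraph V) (hG : IsKTree G k)
    (h₁ : Fintype.card V ≠ k) (h₂ : Fintype.card V ≠ k + 1) :
    IsPathTypeOn G k Finset.univ ↔ {v : V | (G.neighborSet v).ncard = k}.ncard = 2 := by
  classical
  have huc : (Finset.univ : Finset V).card = Fintype.card V := Finset.card_univ
  have hge : k ≤ (Finset.univ : Finset V).card := KTcard_ge hG
  have hcard : k + 2 ≤ (Finset.univ : Finset V).card := by omega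
  have hset : {v : V | (G.neighborSet v).ncard = k}
      = ↑(KTleafSet G k (Finset.univ : Finset V)) := by
    ext x
    rw [Set.mem_setOf_eq, Finset.mem_coe, mem_KTleafSet]
    have hd : (G.neighborSet x).ncard = KTdeg G Finset.univ x := by
      rw [← KTdeg_eq_ncard]
      congr 1
      rw [Finset.coe_univ, Set.inter_univ]
    simp [hd]
  rw [hset, Set.ncard_coe_finset]
  constructor
  · exact fun h => KTpathtype_two_leaves hk h hcard
  · exact fun h => KTktree_pathtype hk hG hcard h
end
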